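/- arXiv:1805.00616 — 4 statements merged into one kernel-verified Lean document; each statement's English description precedes it below -/
import Mathlib

section
/- Let ŵ be any minimizer over W of the truncated empirical risk R̂_{ψ∘ℓ1}, and let w* be any minimizer over W of R_{ℓ1}. Fix ε > 0 and 0 < δ < 1/2, and set α = sqrt((1/n)·log(N(W,ε)/δ²)). Then with probability at least 1 − 2δ over the i.i.d. sample, R_{ℓ1}(ŵ) − R_{ℓ1}(w*) ≤ 2ε·E[‖x‖] + sqrt((1/n)·log(N(W,ε)/δ²)) · ( ε²·E[‖x‖²] + (3/2)·sup_{w∈W} R_{ℓ2}(w) + 1 ). -/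
/-!
Since `exp ψ(x) ≤ 1 + x + x²/2` and `exp (-ψ(x)) ≤ 1 - x + x²/2`, the Chernoff bound for i.i.d.
sums shows that the truncated mean `(1/(nα)) ∑ ψ(α a(zᵢ))` of a variable `a` with `a² ≤ b` lies,
with probability `1 - s`, within `(α/2) E b + log(1/s)/(nα)` of `E a`, from above and from below.
Use the upper bound for the loss at `w*`, and the lower bound with `s = δ/N(W,ε)` at every point
`v` of a minimal `ε`-net for the shifted loss `|y - ⟨x,v⟩| - ε‖x‖`, which lies below the loss at
every `w` with `‖w - v‖ ≤ ε`. On the intersection of these events, of probability `≥ 1 - 2δ`, the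
empirical minimality of `ŵ` chains the two bounds, and the tuning `nα² = log(N/δ²)` turns the two
confidence terms into `α`.
-/

open MeasureTheory Real

/-- The ℓ1-risk `R_{ℓ1}(w) = E_{(x,y)∼P}[|y − ⟨x,w⟩|]`. -/
noncomputable def l1Risk {H : Type*} [NormedAddCommGroup H] [InnerProductSpace ℝ H]
    [MeasurableSpace H] (P : Measure (H × ℝ)) (w : H) : ℝ :=
  ∫ z, |z.2 - (inner ℝ z.1 w : ℝ)| ∂P

/-- The ℓ2-risk `R_{ℓ2}(w) = E_{(x,y)∼P}[(y − ⟨x,w⟩)²]`. -/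
noncomputable def l2Risk {H : Type*} [NormedAddCommGroup H] [InnerProductSpace ℝ H]
    [MeasurableSpace H] (P : Measure (H × ℝ)) (w : H) : ℝ :=
  ∫ z, (z.2 - (inner ℝ z.1 w : ℝ)) ^ 2 ∂P

/-- The truncated empirical risk `R̂_{ψ∘ℓ1}(w) = (1/(nα)) Σ_i ψ(α|y_i − ⟨x_i,w⟩|)`. -/
noncomputable def truncEmpRisk {H : Type*} [NormedAddCommGroup H] [InnerProductSpace ℝ H]
    (ψ : ℝ → ℝ) (α : ℝ) (n : ℕ) (ω : Fin n → H × ℝ) (w : H) : ℝ :=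
  (1 / (n * α)) * ∑ i, ψ (α * |(ω i).2 - (inner ℝ (ω i).1 w : ℝ)|)

/-- The covering number `N(W, ε)`: the minimal cardinality of a finite ε-net of `W`
consisting of points of `W`. -/
noncomputable def coveringNumber {H : Type*} [NormedAddCommGroup H] (W : Set H) (ε : ℝ) : ℕ :=
  sInf {k | ∃ N : Finset H, ↑N ⊆ W ∧ N.card = k ∧ ∀ w ∈ W, ∃ v ∈ N, ‖w - v‖ ≤ ε}

open ProbabilityTheory

section Chernoff

variable {E : Type*} [MeasurableSpace E] {P : Measure E}

theorem measureReal_pi_le_sum_le [IsFiniteMeasure P] {ι : Type*} [Fintype ι] {g : E → ℝ}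
    (hg : Integrable (fun z => exp (g z)) P) (t : ℝ) :
    (Measure.pi fun _ : ι => P).real {ω | t ≤ ∑ i, g (ω i)} ≤
      exp (-t) * (∫ z, exp (g z) ∂P) ^ Fintype.card ι := by
  have hprod : Integrable (fun ω : ι → E => exp (1 * ∑ i, g (ω i))) (Measure.pi fun _ => P) := by
    simpa only [one_mul, exp_sum] using Integrable.fintype_prod (fun _ : ι => hg)
  calc _ ≤ exp (-1 * t) * mgf (fun ω : ι → E => ∑ i, g (ω i)) (Measure.pi fun _ => P) 1 :=
        measure_ge_le_exp_mul_mgf t zero_le_one hprod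
    _ = _ := by
      simp only [mgf, one_mul, neg_one_mul, exp_sum]
      rw [integral_fintype_prod_eq_pow (fun z => exp (g z))]

theorem measure_pi_le_sum_le_of_exp_le_one_add [IsProbabilityMeasure P] {g f : E → ℝ}
    (hg : AEStronglyMeasurable g P) (hf : Integrable f P) (hgf : ∀ z, exp (g z) ≤ 1 + f z)
    (n : ℕ) {s : ℝ} (hs : 0 < s) :
    Measure.pi (fun _ : Fin n => P) {ω | n * ∫ z, f z ∂P - log s ≤ ∑ i, g (ω i)} ≤
      ENNReal.ofReal s := by
  have hexp : Integrable (fun z => exp (g z)) P :=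
    ((integrable_const 1).add hf).mono' (continuous_exp.comp_aestronglyMeasurable hg)
      (ae_of_all _ fun z => by simpa [abs_of_pos (exp_pos _)] using hgf z)
  have hint : ∫ z, exp (g z) ∂P ≤ exp (∫ z, f z ∂P) :=
    calc ∫ z, exp (g z) ∂P ≤ ∫ z, 1 + f z ∂P := integral_mono hexp ((integrable_const 1).add hf) hgf
      _ = 1 + ∫ z, f z ∂P := by rw [integral_add (integrable_const 1) hf]; simp
      _ ≤ exp (∫ z, f z ∂P) := by linarith [add_one_le_exp (∫ z, f z ∂P)]
  rw [← ofReal_measureReal]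
  refine ENNReal.ofReal_le_ofReal ((measureReal_pi_le_sum_le hexp _).trans ?_)
  calc exp (-(n * ∫ z, f z ∂P - log s)) * (∫ z, exp (g z) ∂P) ^ Fintype.card (Fin n)
      ≤ exp (-(n * ∫ z, f z ∂P - log s)) * exp (∫ z, f z ∂P) ^ n := by
        rw [Fintype.card_fin]
        gcongr
    _ = s := by rw [← exp_nat_mul, ← exp_add, neg_sub, sub_add_cancel, exp_log hs]

end Chernoff

noncomputable def truncatedMean {E : Type*} (ψ : ℝ → ℝ) (α : ℝ) {n : ℕ} (ω : Fin n → E)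
    (f : E → ℝ) : ℝ :=
  (1 / (n * α)) * ∑ i, ψ (α * f (ω i))

section Truncation

variable {ψ : ℝ → ℝ}

theorem exp_le_of_le_log_one_add_add_sq (hψub : ∀ x : ℝ, ψ x ≤ log (1 + x + x ^ 2 / 2))
    (x : ℝ) : exp (ψ x) ≤ 1 + x + x ^ 2 / 2 :=
  (le_log_iff_exp_le (by nlinarith [sq_nonneg (x + 1)])).1 (hψub x)

theorem exp_neg_le_of_neg_log_one_sub_add_sq_le
    (hψlb : ∀ x : ℝ, -log (1 - x + x ^ 2 / 2) ≤ ψ x) (x : ℝ) :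
    exp (-ψ x) ≤ 1 - x + x ^ 2 / 2 :=
  (le_log_iff_exp_le (by nlinarith [sq_nonneg (x - 1)])).1 (neg_le.1 (hψlb x))

variable {E : Type*} [MeasurableSpace E] {P : Measure E} [IsProbabilityMeasure P]
  {a b : E → ℝ} {n : ℕ} {α s : ℝ}

theorem measure_pi_le_truncatedMean_le (hψmono : Monotone ψ)
    (hψub : ∀ x : ℝ, ψ x ≤ log (1 + x + x ^ 2 / 2)) (ha : Integrable a P) (hb : Integrable b P)
    (hab : ∀ z, a z ^ 2 ≤ b z) (hn : 0 < n) (hα : 0 < α) (hs : 0 < s) :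
    Measure.pi (fun _ : Fin n => P)
        {ω | ∫ z, a z ∂P + α / 2 * ∫ z, b z ∂P - log s / (n * α) ≤ truncatedMean ψ α ω a} ≤
      ENNReal.ofReal s := by
  have hf : Integrable (fun z => α * a z + α ^ 2 / 2 * b z) P :=
    (ha.const_mul α).add (hb.const_mul _)
  have hg : AEStronglyMeasurable (fun z => ψ (α * a z)) P :=
    (hψmono.measurable.comp_aemeasurable (ha.aemeasurable.const_mul α)).aestronglyMeasurable
  refine (measure_mono fun ω hω => ?_).trans
    (measure_pi_le_sum_le_of_exp_le_one_add hg hf (fun z => ?_) n hs)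
  · have hnα : (0 : ℝ) < n * α := by positivity
    simp only [Set.mem_ofPred_eq, truncatedMean, one_div_mul_eq_div, le_div_iff₀ hnα] at hω ⊢
    rw [integral_add (ha.const_mul α) (hb.const_mul _), integral_const_mul, integral_const_mul]
    have hscale : (∫ z, a z ∂P + α / 2 * ∫ z, b z ∂P - log s / (n * α)) * (n * α) =
        n * (α * ∫ z, a z ∂P + α ^ 2 / 2 * ∫ z, b z ∂P) - log s := by
      field_simp
    linarith
  · calc exp (ψ (α * a z)) ≤ 1 + α * a z + (α * a z) ^ 2 / 2 :=
          exp_le_of_le_log_one_add_add_sq hψub _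
      _ ≤ 1 + (α * a z + α ^ 2 / 2 * b z) := by
          nlinarith [mul_le_mul_of_nonneg_left (hab z) (sq_nonneg α)]

theorem measure_pi_truncatedMean_le_le (hψmono : Monotone ψ)
    (hψlb : ∀ x : ℝ, -log (1 - x + x ^ 2 / 2) ≤ ψ x) (ha : Integrable a P) (hb : Integrable b P)
    (hab : ∀ z, a z ^ 2 ≤ b z) (hn : 0 < n) (hα : 0 < α) (hs : 0 < s) :
    Measure.pi (fun _ : Fin n => P)
        {ω | truncatedMean ψ α ω a ≤ ∫ z, a z ∂P - α / 2 * ∫ z, b z ∂P + log s / (n * α)} ≤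
      ENNReal.ofReal s := by
  have hf₁ : Integrable (fun z => -(α * a z)) P := (ha.const_mul α).neg
  have hf : Integrable (fun z => -(α * a z) + α ^ 2 / 2 * b z) P := hf₁.add (hb.const_mul _)
  have hg : AEStronglyMeasurable (fun z => -ψ (α * a z)) P :=
    (hψmono.measurable.comp_aemeasurable (ha.aemeasurable.const_mul α)).neg.aestronglyMeasurable
  refine (measure_mono fun ω hω => ?_).trans
    (measure_pi_le_sum_le_of_exp_le_one_add hg hf (fun z => ?_) n hs)
  · have hnα : (0 : ℝ) < n * α := by positivity
    simp only [Set.mem_ofPred_eq, truncatedMean, one_div_mul_eq_div, div_le_iff₀ hnα] at hω ⊢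
    rw [integral_add hf₁ (hb.const_mul _), integral_neg, integral_const_mul,
      integral_const_mul, Finset.sum_neg_distrib]
    have hscale : (∫ z, a z ∂P - α / 2 * ∫ z, b z ∂P + log s / (n * α)) * (n * α) =
        n * (α * ∫ z, a z ∂P - α ^ 2 / 2 * ∫ z, b z ∂P) + log s := by
      field_simp
    linarith
  · calc exp (-ψ (α * a z)) ≤ 1 - α * a z + (α * a z) ^ 2 / 2 :=
          exp_neg_le_of_neg_log_one_sub_add_sq_le hψlb _
      _ ≤ 1 + (-(α * a z) + α ^ 2 / 2 * b z) := by
          nlinarith [mul_le_mul_of_nonneg_left (hab z) (sq_nonneg α)]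

end Truncation

section UnionBound

variable {Ω : Type*} [MeasurableSpace Ω] {μ : Measure Ω}

theorem ofReal_one_sub_le_of_measure_compl_le [IsProbabilityMeasure μ] {s : Set Ω} {p : ℝ}
    (hp : 0 ≤ p) (h : μ sᶜ ≤ ENNReal.ofReal p) : ENNReal.ofReal (1 - p) ≤ μ s := by
  rw [ENNReal.ofReal_sub 1 hp, ENNReal.ofReal_one, tsub_le_iff_right, ← measure_univ (μ := μ)]
  exact (measure_univ_le_add_compl s).trans (add_le_add_right h _)

theorem measure_biUnion_finset_le_ofReal {ι : Type*} (T : Finset ι) {B : ι → Set Ω} {δ : ℝ}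
    (h : ∀ v ∈ T, μ (B v) ≤ ENNReal.ofReal (δ / T.card)) :
    μ (⋃ v ∈ T, B v) ≤ ENNReal.ofReal δ := by
  rcases T.eq_empty_or_nonempty with rfl | hT
  · simp
  calc μ (⋃ v ∈ T, B v) ≤ ∑ v ∈ T, μ (B v) := measure_biUnion_finset_le T B
    _ ≤ ∑ _v ∈ T, ENNReal.ofReal (δ / T.card) := Finset.sum_le_sum h
    _ = ENNReal.ofReal δ := by
      rw [Finset.sum_const, nsmul_eq_mul, ← ENNReal.ofReal_natCast,
        ← ENNReal.ofReal_mul (Nat.cast_nonneg _), mul_div_cancel₀ _ (by positivity)]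

end UnionBound

theorem exists_finset_card_eq_coveringNumber {H : Type*} [NormedAddCommGroup H] {W : Set H}
    {ε : ℝ} (h : ∃ N : Finset H, ↑N ⊆ W ∧ ∀ w ∈ W, ∃ v ∈ N, ‖w - v‖ ≤ ε) :
    ∃ N : Finset H, ↑N ⊆ W ∧ N.card = coveringNumber W ε ∧ ∀ w ∈ W, ∃ v ∈ N, ‖w - v‖ ≤ ε :=
  let ⟨N, hNW, hN⟩ := h
  Nat.sInf_mem (s := {k | ∃ N : Finset H, (N : Set H) ⊆ W ∧ N.card = k ∧
    ∀ w ∈ W, ∃ v ∈ N, ‖w - v‖ ≤ ε}) ⟨N.card, N, hNW, rfl, hN⟩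

theorem pos_and_log_div_add_log_div_eq_of_eq_sqrt {n : ℕ} (hn : 0 < n) {N δ α : ℝ} (hN : 1 ≤ N)
    (hδ : 0 < δ) (hδ1 : δ < 1) (hα : α = sqrt (1 / n * log (N / δ ^ 2))) :
    0 < α ∧ log (δ / N) / (n * α) + log δ / (n * α) = -α := by
  have hlog : 0 < log (N / δ ^ 2) :=
    log_pos ((one_lt_div (by positivity)).2 (by nlinarith))
  have hαpos : 0 < α := hα ▸ sqrt_pos.2 (by positivity)
  have hαsq : n * α ^ 2 = log (N / δ ^ 2) := by
    rw [hα, sq_sqrt (by positivity)]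
    field_simp
  refine ⟨hαpos, ?_⟩
  have hsum : log (δ / N) + log δ = -(n * α ^ 2) := by
    rw [hαsq, log_div hδ.ne' (by positivity), log_div (by positivity) (by positivity), log_pow]
    push_cast
    ring
  rw [← add_div, hsum]
  field_simp

open InnerProductSpace

section Regression

variable {H : Type*} [NormedAddCommGroup H] [InnerProductSpace ℝ H]

theorem abs_sub_inner_le_abs_sub_inner_add (x a b : H) (y : ℝ) :
    |y - ⟪x, a⟫_ℝ| ≤ |y - ⟪x, b⟫_ℝ| + ‖x‖ * ‖a - b‖ :=
  calc |y - ⟪x, a⟫_ℝ| = |(y - ⟪x, b⟫_ℝ) + ⟪x, b - a⟫_ℝ| := by rw [inner_sub_right]; ring_nf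
    _ ≤ |y - ⟪x, b⟫_ℝ| + |⟪x, b - a⟫_ℝ| := abs_add_le _ _
    _ ≤ |y - ⟪x, b⟫_ℝ| + ‖x‖ * ‖a - b‖ := by
      rw [norm_sub_rev]
      gcongr
      exact abs_real_inner_le_norm _ _

theorem truncatedMean_le_truncEmpRisk {ψ : ℝ → ℝ} (hψmono : Monotone ψ) {α ε : ℝ} (hα : 0 ≤ α)
    {v w : H} (hwv : ‖w - v‖ ≤ ε) {n : ℕ} (ω : Fin n → H × ℝ) :
    truncatedMean ψ α ω (fun z => |z.2 - ⟪z.1, v⟫_ℝ| - ε * ‖z.1‖) ≤ truncEmpRisk ψ α n ω w := by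
  refine mul_le_mul_of_nonneg_left (Finset.sum_le_sum fun i _ => hψmono ?_) (by positivity)
  refine mul_le_mul_of_nonneg_left ?_ hα
  have hloss := abs_sub_inner_le_abs_sub_inner_add (ω i).1 v w (ω i).2
  rw [norm_sub_rev] at hloss
  linarith [mul_le_mul_of_nonneg_left hwv (norm_nonneg (ω i).1)]

variable [MeasurableSpace H] {P : Measure (H × ℝ)}

theorem l1Risk_le_l1Risk_add {v w : H} {ε : ℝ}
    (hv : Integrable (fun z : H × ℝ => |z.2 - ⟪z.1, v⟫_ℝ|) P)
    (hx : Integrable (fun z : H × ℝ => ‖z.1‖) P) (hwv : ‖w - v‖ ≤ ε) :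
    l1Risk P w ≤ l1Risk P v + ε * ∫ z, ‖z.1‖ ∂P := by
  rw [l1Risk, l1Risk, ← integral_const_mul, ← integral_add hv (hx.const_mul ε)]
  refine integral_mono_of_nonneg (ae_of_all _ fun z => abs_nonneg _) (hv.add (hx.const_mul ε))
    (ae_of_all _ fun z => ?_)
  have hloss := abs_sub_inner_le_abs_sub_inner_add z.1 w v z.2
  linarith [mul_le_mul_of_nonneg_left hwv (norm_nonneg z.1)]

theorem measure_pi_truncatedMean_sub_le [IsProbabilityMeasure P] {ψ : ℝ → ℝ}
    (hψmono : Monotone ψ) (hψlb : ∀ x : ℝ, -log (1 - x + x ^ 2 / 2) ≤ ψ x) {v : H}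
    (hv1 : Integrable (fun z : H × ℝ => |z.2 - ⟪z.1, v⟫_ℝ|) P)
    (hv2 : Integrable (fun z : H × ℝ => (z.2 - ⟪z.1, v⟫_ℝ) ^ 2) P)
    (hx1 : Integrable (fun z : H × ℝ => ‖z.1‖) P) (hx2 : Integrable (fun z : H × ℝ => ‖z.1‖ ^ 2) P)
    {ε : ℝ} (hε : 0 ≤ ε) {n : ℕ} (hn : 0 < n) {α s : ℝ} (hα : 0 < α) (hs : 0 < s) :
    Measure.pi (fun _ : Fin n => P)
        {ω | truncatedMean ψ α ω (fun z => |z.2 - ⟪z.1, v⟫_ℝ| - ε * ‖z.1‖) ≤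
          l1Risk P v - ε * ∫ z, ‖z.1‖ ∂P - α / 2 * (l2Risk P v + ε ^ 2 * ∫ z, ‖z.1‖ ^ 2 ∂P)
            + log s / (n * α)} ≤
      ENNReal.ofReal s := by
  have hsq : ∀ z : H × ℝ, (|z.2 - ⟪z.1, v⟫_ℝ| - ε * ‖z.1‖) ^ 2 ≤
      (z.2 - ⟪z.1, v⟫_ℝ) ^ 2 + ε ^ 2 * ‖z.1‖ ^ 2 := fun z => by
    nlinarith [sq_abs (z.2 - ⟪z.1, v⟫_ℝ),
      mul_nonneg (mul_nonneg hε (abs_nonneg (z.2 - ⟪z.1, v⟫_ℝ))) (norm_nonneg z.1)]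
  have ha : Integrable (fun z : H × ℝ => |z.2 - ⟪z.1, v⟫_ℝ| - ε * ‖z.1‖) P :=
    hv1.sub (hx1.const_mul ε)
  have hb : Integrable (fun z : H × ℝ => (z.2 - ⟪z.1, v⟫_ℝ) ^ 2 + ε ^ 2 * ‖z.1‖ ^ 2) P :=
    hv2.add (hx2.const_mul _)
  have hdev := measure_pi_truncatedMean_le_le hψmono hψlb ha hb hsq hn hα hs
  rwa [integral_sub hv1 (hx1.const_mul ε), integral_add hv2 (hx2.const_mul _), integral_const_mul,
    integral_const_mul] at hdev

theorem l1Risk_sub_le_of_truncated_bounds {ψ : ℝ → ℝ} (hψmono : Monotone ψ) {W : Set H}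
    (hW : BddAbove (l2Risk P '' W)) (hx : Integrable (fun z : H × ℝ => ‖z.1‖) P) {v w wstar : H}
    (hv : v ∈ W) (hwstar : wstar ∈ W) (hv1 : Integrable (fun z : H × ℝ => |z.2 - ⟪z.1, v⟫_ℝ|) P)
    {ε α L₁ L₂ : ℝ} (hα : 0 < α) (hwv : ‖w - v‖ ≤ ε) (hL : L₁ + L₂ = -α) {n : ℕ}
    {ω : Fin n → H × ℝ}
    (hlow : l1Risk P v - ε * ∫ z, ‖z.1‖ ∂P - α / 2 * (l2Risk P v + ε ^ 2 * ∫ z, ‖z.1‖ ^ 2 ∂P)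
      + L₁ < truncatedMean ψ α ω (fun z => |z.2 - ⟪z.1, v⟫_ℝ| - ε * ‖z.1‖))
    (hmin : truncEmpRisk ψ α n ω w ≤ truncEmpRisk ψ α n ω wstar)
    (hup : truncEmpRisk ψ α n ω wstar < l1Risk P wstar + α / 2 * l2Risk P wstar - L₂) :
    l1Risk P w - l1Risk P wstar ≤ 2 * ε * ∫ z, ‖z.1‖ ∂P
      + α * (ε ^ 2 * ∫ z, ‖z.1‖ ^ 2 ∂P + 3 / 2 * sSup (l2Risk P '' W) + 1) := by
  have hchain := (hlow.trans_le (truncatedMean_le_truncEmpRisk hψmono hα.le hwv ω)).trans_le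
    (hmin.trans_lt hup).le
  have hS : ∀ u ∈ W, α * l2Risk P u ≤ α * sSup (l2Risk P '' W) := fun u hu =>
    mul_le_mul_of_nonneg_left (le_csSup hW ⟨u, hu, rfl⟩) hα.le
  have hl2 : 0 ≤ α * l2Risk P wstar := mul_nonneg hα.le (integral_nonneg fun _ => sq_nonneg _)
  have hm2 : 0 ≤ α * (ε ^ 2 * ∫ z, ‖z.1‖ ^ 2 ∂P) :=
    mul_nonneg hα.le (mul_nonneg (sq_nonneg ε) (integral_nonneg fun _ => sq_nonneg _))
  linarith [l1Risk_le_l1Risk_add hv1 hx hwv, hS v hv, hS wstar hwstar]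

end Regression

theorem truncated_min_excess_risk_tuned_general
    {H : Type*} [NormedAddCommGroup H] [InnerProductSpace ℝ H]
    [MeasurableSpace H]
    (P : Measure (H × ℝ)) [IsProbabilityMeasure P]
    (W : Set H) (ψ : ℝ → ℝ)
    (hψmono : Monotone ψ)
    (hψlb : ∀ x : ℝ, -Real.log (1 - x + x ^ 2 / 2) ≤ ψ x)
    (hψub : ∀ x : ℝ, ψ x ≤ Real.log (1 + x + x ^ 2 / 2))
    (n : ℕ) (hn : 0 < n)
    (ε δ : ℝ) (hε : 0 < ε) (hδ : 0 < δ) (hδ' : δ < 1 / 2)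
    -- the tuned choice of α
    (α : ℝ)
    (hαdef : α = Real.sqrt ((1 / n) * Real.log ((coveringNumber W ε : ℝ) / δ ^ 2)))
    -- (A1): W is totally bounded: for every ε > 0 there is a finite ε-net of W
    (hA1 : ∀ ε' > (0 : ℝ), ∃ N : Finset H, ↑N ⊆ W ∧ ∀ w ∈ W, ∃ v ∈ N, ‖w - v‖ ≤ ε')
    -- (A2): E‖x‖² < ∞ (and hence E‖x‖ < ∞)
    (hxInt : Integrable (fun z : H × ℝ => ‖z.1‖) P)
    (hA2 : Integrable (fun z : H × ℝ => ‖z.1‖ ^ 2) P)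
    -- risks are well defined on W
    (hInt1 : ∀ w ∈ W, Integrable (fun z : H × ℝ => |z.2 - (inner ℝ z.1 w : ℝ)|) P)
    (hInt2 : ∀ w ∈ W, Integrable (fun z : H × ℝ => (z.2 - (inner ℝ z.1 w : ℝ)) ^ 2) P)
    -- (A3): sup_{w ∈ W} R_{ℓ2}(w) < ∞
    (hA3 : BddAbove (l2Risk P '' W))
    -- ŵ : any minimizer of the truncated empirical risk over W
    (what : (Fin n → H × ℝ) → H)
    (hwhatW : ∀ ω, what ω ∈ W)
    (hwhatMin : ∀ ω, ∀ w ∈ W, truncEmpRisk ψ α n ω (what ω) ≤ truncEmpRisk ψ α n ω w)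
    -- w* : any minimizer of the ℓ1-risk over W
    (wstar : H) (hwstarW : wstar ∈ W) :
    ENNReal.ofReal (1 - 2 * δ) ≤
      Measure.pi (fun _ : Fin n => P)
        {ω | l1Risk P (what ω) - l1Risk P wstar ≤
          2 * ε * (∫ z, ‖z.1‖ ∂P)
          + Real.sqrt ((1 / n) * Real.log ((coveringNumber W ε : ℝ) / δ ^ 2)) *
            (ε ^ 2 * (∫ z, ‖z.1‖ ^ 2 ∂P) + 3 / 2 * sSup (l2Risk P '' W) + 1)} := by
  obtain ⟨T, hTW, hTcard, hTcov⟩ := exists_finset_card_eq_coveringNumber (hA1 ε hε)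
  rw [← hαdef]
  rw [← hTcard] at hαdef
  have hT : (1 : ℝ) ≤ T.card := by
    obtain ⟨v, hvT, -⟩ := hTcov wstar hwstarW
    exact_mod_cast Finset.card_pos.2 ⟨v, hvT⟩
  obtain ⟨hα, hlog⟩ := pos_and_log_div_add_log_div_eq_of_eq_sqrt hn hT hδ (by linarith) hαdef
  have hupper := measure_pi_le_truncatedMean_le hψmono hψub (hInt1 wstar hwstarW)
    (hInt2 wstar hwstarW) (fun z => (sq_abs _).le) hn hα hδ
  have hlower := measure_biUnion_finset_le_ofReal T fun v hv =>
    measure_pi_truncatedMean_sub_le hψmono hψlb (hInt1 v (hTW hv)) (hInt2 v (hTW hv)) hxInt hA2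
      hε.le hn hα (s := δ / T.card) (by positivity)
  refine ofReal_one_sub_le_of_measure_compl_le (by positivity) <| (measure_mono ?_).trans <|
    (measure_union_le _ _).trans <| (add_le_add hupper hlower).trans_eq <| by
      rw [← ENNReal.ofReal_add hδ.le hδ.le, two_mul]
  rw [Set.compl_subset_comm]
  intro ω hω
  simp only [Set.compl_union, Set.compl_iUnion, Set.mem_inter_iff, Set.mem_iInter,
    Set.mem_compl_iff, Set.mem_ofPred_eq, not_le] at hω
  obtain ⟨v, hvT, hwv⟩ := hTcov (what ω) (hwhatW ω)
  exact l1Risk_sub_le_of_truncated_bounds hψmono hA3 hxInt (hTW hvT) hwstarW (hInt1 v (hTW hvT))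
    hα hwv hlog (hω.2 v hvT) (hwhatMin ω wstar hwstarW) hω.1

/-- Theorem 1 of the paper (second part): with the tuned choice
`α = sqrt((1/n) log(N(W,ε)/δ²))`, with probability at least `1 − 2δ`,
`R_{ℓ1}(ŵ) − R_{ℓ1}(w*) ≤ 2ε E‖x‖
  + sqrt((1/n) log(N(W,ε)/δ²)) (ε² E‖x‖² + (3/2) sup_{w∈W} R_{ℓ2}(w) + 1)`. -/
theorem truncated_min_excess_risk_tuned
    {H : Type*} [NormedAddCommGroup H] [InnerProductSpace ℝ H] [CompleteSpace H]
    [MeasurableSpace H] [BorelSpace H]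
    (P : Measure (H × ℝ)) [IsProbabilityMeasure P]
    (W : Set H) (ψ : ℝ → ℝ)
    (hψmono : Monotone ψ)
    (hψlb : ∀ x : ℝ, -Real.log (1 - x + x ^ 2 / 2) ≤ ψ x)
    (hψub : ∀ x : ℝ, ψ x ≤ Real.log (1 + x + x ^ 2 / 2))
    (n : ℕ) (hn : 0 < n)
    (ε δ : ℝ) (hε : 0 < ε) (hδ : 0 < δ) (hδ' : δ < 1 / 2)
    -- the tuned choice of α
    (α : ℝ)
    (hαdef : α = Real.sqrt ((1 / n) * Real.log ((coveringNumber W ε : ℝ) / δ ^ 2)))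
    -- (A1): W is totally bounded: for every ε > 0 there is a finite ε-net of W
    (hA1 : ∀ ε' > (0 : ℝ), ∃ N : Finset H, ↑N ⊆ W ∧ ∀ w ∈ W, ∃ v ∈ N, ‖w - v‖ ≤ ε')
    -- (A2): E‖x‖² < ∞ (and hence E‖x‖ < ∞)
    (hxInt : Integrable (fun z : H × ℝ => ‖z.1‖) P)
    (hA2 : Integrable (fun z : H × ℝ => ‖z.1‖ ^ 2) P)
    -- risks are well defined on W
    (hInt1 : ∀ w ∈ W, Integrable (fun z : H × ℝ => |z.2 - (inner ℝ z.1 w : ℝ)|) P)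
    (hInt2 : ∀ w ∈ W, Integrable (fun z : H × ℝ => (z.2 - (inner ℝ z.1 w : ℝ)) ^ 2) P)
    -- (A3): sup_{w ∈ W} R_{ℓ2}(w) < ∞
    (hA3 : BddAbove (l2Risk P '' W))
    -- ŵ : any minimizer of the truncated empirical risk over W
    (what : (Fin n → H × ℝ) → H)
    (hwhatW : ∀ ω, what ω ∈ W)
    (hwhatMin : ∀ ω, ∀ w ∈ W, truncEmpRisk ψ α n ω (what ω) ≤ truncEmpRisk ψ α n ω w)
    -- w* : any minimizer of the ℓ1-risk over W
    (wstar : H) (hwstarW : wstar ∈ W)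
    (hwstarMin : ∀ w ∈ W, l1Risk P wstar ≤ l1Risk P w) :
    ENNReal.ofReal (1 - 2 * δ) ≤
      Measure.pi (fun _ : Fin n => P)
        {ω | l1Risk P (what ω) - l1Risk P wstar ≤
          2 * ε * (∫ z, ‖z.1‖ ∂P)
          + Real.sqrt ((1 / n) * Real.log ((coveringNumber W ε : ℝ) / δ ^ 2)) *
            (ε ^ 2 * (∫ z, ‖z.1‖ ^ 2 ∂P) + 3 / 2 * sSup (l2Risk P '' W) + 1)} :=
  truncated_min_excess_risk_tuned_general P W ψ hψmono hψlb hψub n hn ε δ hε hδ hδ' α hαdef hA1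
    hxInt hA2 hInt1 hInt2 hA3 what hwhatW hwhatMin wstar hwstarW
end

section
/- Let W ⊆ ℝ^d with ‖w‖ ≤ B for all w ∈ W, let ŵ be any minimizer over W of the truncated empirical risk R̂_{ψ∘ℓ1} with parameter α = sqrt((1/n)·log(N(W,1/n)/δ²)), and let w* be any minimizer over W of R_{ℓ1}. Then for every 0 < δ < 1/2, with probability at least 1 − 2δ over the i.i.d. sample, R_{ℓ1}(ŵ) − R_{ℓ1}(w*) ≤ (2/n)·E[‖x‖] + sqrt( (1/n)·( d·log(6nB) + log(1/δ²) ) ) · ( (1/n²)·E[‖x‖²] + (3/2)·sup_{w∈W} R_{ℓ2}(w) + 1 ). -/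
open MeasureTheory Real

/-!
Catoni's argument. The bounds on `ψ` give `E exp (±ψ (α g)) ≤ 1 ± α E g + α² E g² / 2`, so a
Chernoff bound shows that, outside an event of probability `2δ`, the empirical truncated loss is
below its upper envelope at `w*` and above its lower envelope at every point of a minimal
`1/n`-net of `W` (confidence `δ / N(W, 1/n)` each). The lower envelope is taken for the loss
shifted by `‖x‖ / n`: at the net point `v` nearest to `ŵ` this shifted loss is pointwise below the
loss at `ŵ`, so monotonicity of `ψ` and minimality of `ŵ` squeeze `R(v) - R(w*)` between the two
envelopes, and `R` is `E‖x‖`-Lipschitz. For the tuned `α` the deviation term `log (N / δ²) / (nα)`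
equals `α`, and a volume argument gives `N(W, 1/n) ≤ (2nB + 1)^d`. If `B ≤ 1/n`, the Lipschitz
bound alone holds for every sample.
-/

open Module Metric
open scoped ENNReal RealInnerProductSpace

section CoveringNumber

variable {H : Type*} [NormedAddCommGroup H] {W : Set H} {ε : ℝ} {T : Finset H}

theorem coveringNumber_le_card (hTW : ↑T ⊆ W) (hT : ∀ w ∈ W, ∃ v ∈ T, ‖w - v‖ ≤ ε) :
    coveringNumber W ε ≤ T.card :=
  Nat.sInf_le ⟨T, hTW, rfl, hT⟩

theorem exists_cover_card_eq_coveringNumber (hTW : ↑T ⊆ W) (hT : ∀ w ∈ W, ∃ v ∈ T, ‖w - v‖ ≤ ε) :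
    ∃ N : Finset H, ↑N ⊆ W ∧ N.card = coveringNumber W ε ∧ ∀ w ∈ W, ∃ v ∈ N, ‖w - v‖ ≤ ε :=
  Nat.sInf_mem (⟨T.card, T, hTW, rfl, hT⟩ :
    {k | ∃ N : Finset H, ↑N ⊆ W ∧ N.card = k ∧ ∀ w ∈ W, ∃ v ∈ N, ‖w - v‖ ≤ ε}.Nonempty)

end CoveringNumber

section Packing

variable {E : Type*} [NormedAddCommGroup E] [NormedSpace ℝ E] [FiniteDimensional ℝ E]

-- Disjoint balls of radius `ε / 2` around the points fit in the ball of radius `B + ε / 2`.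
theorem Finset.card_le_of_isSeparated_of_norm_le {T : Finset E} {B ε : ℝ} (hε : 0 < ε) (hB : 0 ≤ B)
    (hTB : ∀ v ∈ T, ‖v‖ ≤ B) (hsep : IsSeparated (ENNReal.ofReal ε) (T : Set E)) :
    (T.card : ℝ) ≤ ((2 * B + ε) / ε) ^ finrank ℝ E := by
  let _ : MeasurableSpace E := borel E
  have : BorelSpace E := ⟨rfl⟩
  set μ : Measure E := Measure.addHaar
  have hdisj : (T : Set E).PairwiseDisjoint fun v => ball v (ε / 2) :=
    fun a ha b hb hab => ball_disjoint_ball <| by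
      have : ENNReal.ofReal ε < edist a b := hsep ha hb hab
      rw [edist_dist, ENNReal.ofReal_lt_ofReal_iff'] at this
      linarith [this.1]
  have hsub : (⋃ v ∈ T, ball v (ε / 2)) ⊆ ball 0 (B + ε / 2) := by
    simp only [Set.iUnion_subset_iff]
    intro v hv x hx
    rw [mem_ball_zero_iff]
    linarith [norm_le_insert' x v, mem_ball_iff_norm.1 hx, hTB v hv]
  have hvol : T.card * μ (ball 0 (ε / 2)) ≤ μ (ball 0 (B + ε / 2)) := calc
    T.card * μ (ball 0 (ε / 2)) = ∑ v ∈ T, μ (ball v (ε / 2)) := by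
      simp [Measure.addHaar_ball_center]
    _ = μ (⋃ v ∈ T, ball v (ε / 2)) :=
      (measure_biUnion_finset hdisj fun _ _ => measurableSet_ball).symm
    _ ≤ _ := measure_mono hsub
  rw [Measure.addHaar_ball_of_pos μ _ (half_pos hε),
    Measure.addHaar_ball_of_pos μ (0 : E) (by positivity : 0 < B + ε / 2), ← mul_assoc] at hvol
  have hcancel := (ENNReal.mul_le_mul_iff_left (measure_ball_pos μ (0 : E) one_pos).ne'
    measure_ball_lt_top.ne).1 hvol
  rw [← ENNReal.ofReal_natCast, ← ENNReal.ofReal_mul (by positivity),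
    ENNReal.ofReal_le_ofReal_iff (by positivity)] at hcancel
  rw [show (2 * B + ε) / ε = (B + ε / 2) / (ε / 2) by field_simp, div_pow,
    le_div_iff₀ (by positivity)]
  exact hcancel

theorem packingNumber_le_floor_of_norm_le {W : Set E} {B ε : ℝ} (hε : 0 < ε) (hB : 0 ≤ B)
    (hWB : ∀ w ∈ W, ‖w‖ ≤ B) :
    packingNumber ε.toNNReal W ≤ ⌊((2 * B + ε) / ε) ^ finrank ℝ E⌋₊ := by
  simp only [packingNumber, iSup_le_iff]
  intro C hCW hC
  by_contra! hlarge
  obtain ⟨t, htC, ht⟩ := Set.exists_subset_encard_eq (Order.add_one_le_of_lt hlarge)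
  have htfin : t.Finite := Set.finite_of_encard_eq_coe ht
  have hcard := Finset.card_le_of_isSeparated_of_norm_le hε hB (T := htfin.toFinset)
    (fun v hv => hWB v (hCW (htC (htfin.mem_toFinset.1 hv))))
    (by rw [Set.Finite.coe_toFinset]; exact hC.subset htC)
  rw [htfin.encard_eq_coe_toFinset_card] at ht
  norm_cast at ht
  rw [ht] at hcard
  push_cast at hcard
  linarith [Nat.lt_floor_add_one (((2 * B + ε) / ε) ^ finrank ℝ E)]

theorem exists_finset_cover_card_le_of_norm_le {W : Set E} {B ε : ℝ} (hε : 0 < ε) (hB : 0 ≤ B)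
    (hWB : ∀ w ∈ W, ‖w‖ ≤ B) :
    ∃ T : Finset E, ↑T ⊆ W ∧ (∀ w ∈ W, ∃ v ∈ T, ‖w - v‖ ≤ ε) ∧
      (T.card : ℝ) ≤ ((2 * B + ε) / ε) ^ finrank ℝ E := by
  have hfin : packingNumber ε.toNNReal W ≠ ⊤ :=
    ne_top_of_le_ne_top (ENat.natCast_ne_top _) (packingNumber_le_floor_of_norm_le hε hB hWB)
  set C := maximalSeparatedSet ε.toNNReal W
  have hCW : C ⊆ W := maximalSeparatedSet_subset
  have hCfin : C.Finite := Set.encard_ne_top_iff.1 (encard_maximalSeparatedSet hfin ▸ hfin)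
  refine ⟨hCfin.toFinset, by simpa using hCW, fun w hw => ?_,
    Finset.card_le_of_isSeparated_of_norm_le hε hB
      (fun v hv => hWB v (hCW (hCfin.mem_toFinset.1 hv)))
      (by rw [Set.Finite.coe_toFinset]; exact isSeparated_maximalSeparatedSet)⟩
  obtain ⟨v, hv, hwv⟩ := isCover_maximalSeparatedSet hfin hw
  exact ⟨v, hCfin.mem_toFinset.2 hv, by
    rw [← dist_eq_norm, ← edist_le_ofReal hε.le]; exact hwv⟩

theorem coveringNumber_one_div_le {W : Set E} {B : ℝ} {n : ℕ} (hn : 0 < n) (hBn : 1 / n < B)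
    (hWB : ∀ w ∈ W, ‖w‖ ≤ B) : (coveringNumber W (1 / n) : ℝ) ≤ (6 * n * B) ^ finrank ℝ E := by
  have hn' : (0 : ℝ) < n := Nat.cast_pos.2 hn
  have hB : 0 < B := (one_div_pos.2 hn').trans hBn
  obtain ⟨T, hTW, hT, hTcard⟩ :=
    exists_finset_cover_card_le_of_norm_le (one_div_pos.2 hn') hB.le hWB
  refine (Nat.cast_le.2 (coveringNumber_le_card hTW hT)).trans (hTcard.trans ?_)
  rw [div_lt_iff₀ hn'] at hBn
  gcongr
  field_simp
  linarith

end Packing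

section Chernoff

variable {Z : Type*} [MeasurableSpace Z] (P : Measure Z) [IsProbabilityMeasure P]

theorem measure_pi_sum_ge_le_exp_neg (n : ℕ) {f h : Z → ℝ} (hh : Integrable h P)
    (hfh : ∀ z, exp (f z) ≤ h z) {c : ℝ} (hc : ∫ z, h z ∂P ≤ exp c) (t : ℝ) :
    Measure.pi (fun _ : Fin n => P) {ω | n * c + t ≤ ∑ i, f (ω i)} ≤ ENNReal.ofReal (exp (-t)) := by
  set μ := Measure.pi (fun _ : Fin n => P)
  set F : (Fin n → Z) → ℝ := fun ω => ∏ i, h (ω i)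
  have hh0 : 0 ≤ h := fun z => (exp_pos _).le.trans (hfh z)
  have hF : ∫ ω, F ω ∂μ ≤ exp (n * c) := by
    rw [integral_fintype_prod_eq_pow, Fintype.card_fin, exp_nat_mul]
    exact pow_le_pow_left₀ (integral_nonneg hh0) hc n
  have hsub : {ω | n * c + t ≤ ∑ i, f (ω i)} ⊆ {ω | exp (n * c + t) ≤ F ω} := fun ω hω =>
    calc exp (n * c + t) ≤ exp (∑ i, f (ω i)) := exp_le_exp.2 hω
      _ = ∏ i, exp (f (ω i)) := exp_sum _ _
      _ ≤ F ω := Finset.prod_le_prod (fun i _ => (exp_pos _).le) fun i _ => hfh _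
  have hmarkov := mul_meas_ge_le_integral_of_nonneg
    (Filter.Eventually.of_forall fun ω => Finset.prod_nonneg fun i _ => hh0 (ω i))
    (Integrable.fintype_prod (ι := Fin n) (μ := fun _ => P) fun _ => hh) (exp (n * c + t))
  refine (measure_mono hsub).trans ((ENNReal.le_ofReal_iff_toReal_le (measure_ne_top _ _)
    (exp_pos _).le).2 ?_)
  rw [← measureReal_def, ← mul_le_mul_iff_of_pos_left (exp_pos (n * c + t)), ← exp_add,
    add_neg_cancel_right]
  exact hmarkov.trans hF

theorem measure_pi_sum_truncated_ge_le_exp_neg (n : ℕ) {φ : ℝ → ℝ}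
    (hφ : ∀ s, φ s ≤ log (1 + s + s ^ 2 / 2)) {g : Z → ℝ} (hg : Integrable g P)
    (hg2 : Integrable (fun z => g z ^ 2) P) (α t : ℝ) :
    Measure.pi (fun _ : Fin n => P)
        {ω | n * (α * ∫ z, g z ∂P + α ^ 2 * (∫ z, g z ^ 2 ∂P) / 2) + t ≤ ∑ i, φ (α * g (ω i))} ≤
      ENNReal.ofReal (exp (-t)) := by
  have h1 : Integrable (fun z => 1 + α * g z) P := (integrable_const 1).add (hg.const_mul α)
  have h2 : Integrable (fun z => α ^ 2 * g z ^ 2 / 2) P := (hg2.const_mul (α ^ 2)).div_const 2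
  refine measure_pi_sum_ge_le_exp_neg P n (f := fun z => φ (α * g z))
    (h := fun z => 1 + α * g z + α ^ 2 * g z ^ 2 / 2) (h1.add h2)
    (fun z => ?_) ?_ t
  · rw [← le_log_iff_exp_le (by nlinarith [sq_nonneg (α * g z + 1)])]
    convert hφ (α * g z) using 2
    ring
  · rw [integral_add h1 h2, integral_add (integrable_const 1) (hg.const_mul α), integral_div,
      integral_const_mul, integral_const_mul, integral_const, probReal_univ, one_smul]
    linarith [add_one_le_exp (α * ∫ z, g z ∂P + α ^ 2 * (∫ z, g z ^ 2 ∂P) / 2)]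

end Chernoff

theorem ofReal_one_sub_le_measure {Ω : Type*} [MeasurableSpace Ω] {μ : Measure Ω}
    [IsProbabilityMeasure μ] {S Bad : Set Ω} {p : ℝ} (hp : 0 ≤ p)
    (hBad : μ Bad ≤ ENNReal.ofReal p) (hS : Badᶜ ⊆ S) : ENNReal.ofReal (1 - p) ≤ μ S := by
  rw [ENNReal.ofReal_sub _ hp, ENNReal.ofReal_one, tsub_le_iff_right]
  calc 1 = μ Set.univ := measure_univ.symm
    _ ≤ μ (S ∪ Bad) := measure_mono fun ω _ => by
      by_cases h : ω ∈ Bad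
      exacts [Or.inr h, Or.inl (hS h)]
    _ ≤ μ S + ENNReal.ofReal p := (measure_union_le S Bad).trans (by gcongr)

theorem div_mul_sqrt_one_div_mul (a m : ℝ) : a / (m * sqrt (1 / m * a)) = sqrt (1 / m * a) := by
  rcases (sqrt_nonneg (1 / m * a)).eq_or_lt with hs | hs
  · rw [← hs, mul_zero, div_zero]
  have hm : m ≠ 0 := by rintro rfl; simp at hs
  rw [div_eq_iff (mul_ne_zero hm hs.ne'), mul_left_comm, mul_self_sqrt (sqrt_pos.1 hs).le]
  field_simp

theorem sqrt_log_div_le {n d N : ℕ} {c δ : ℝ} (hN : 0 < N) (hNc : (N : ℝ) ≤ c ^ d) (hδ : 0 < δ) :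
    sqrt (1 / n * log (N / δ ^ 2)) ≤ sqrt (1 / n * (d * log c + log (1 / δ ^ 2))) := by
  have hN' : (0 : ℝ) < N := Nat.cast_pos.2 hN
  gcongr sqrt (1 / n * ?_)
  rw [div_eq_mul_one_div (N : ℝ), log_mul hN'.ne' (by positivity), ← log_pow]
  gcongr

section Regression

variable {H : Type*} [NormedAddCommGroup H] [InnerProductSpace ℝ H] {ψ : ℝ → ℝ}

def absLoss (w : H) (z : H × ℝ) : ℝ := |z.2 - ⟪z.1, w⟫|

theorem absLoss_le_add (w w' : H) (z : H × ℝ) :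
    absLoss w z ≤ absLoss w' z + ‖z.1‖ * ‖w - w'‖ :=
  calc absLoss w z = |(z.2 - ⟪z.1, w'⟫) + ⟪z.1, w' - w⟫| := by
        rw [absLoss, inner_sub_right]; ring_nf
    _ ≤ absLoss w' z + |⟪z.1, w' - w⟫| := abs_add_le _ _
    _ ≤ absLoss w' z + ‖z.1‖ * ‖w - w'‖ := by
        rw [norm_sub_rev]; gcongr; exact abs_real_inner_le_norm _ _

theorem sum_truncLoss_shift_le (hψ : Monotone ψ) {α r : ℝ} (hα : 0 ≤ α) {n : ℕ}
    (ω : Fin n → H × ℝ) {w v : H} (hwv : ‖w - v‖ ≤ r) :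
    ∑ i, ψ (α * (absLoss v (ω i) - r * ‖(ω i).1‖)) ≤ ∑ i, ψ (α * absLoss w (ω i)) :=
  Finset.sum_le_sum fun i _ => hψ <| mul_le_mul_of_nonneg_left (by
    nlinarith [absLoss_le_add v w (ω i), norm_sub_rev v w, norm_nonneg (ω i).1]) hα

theorem sum_truncLoss_le_of_truncEmpRisk_le {α : ℝ} (hα : 0 < α) {n : ℕ} (hn : 0 < n)
    {ω : Fin n → H × ℝ} {w w' : H} (h : truncEmpRisk ψ α n ω w ≤ truncEmpRisk ψ α n ω w') :
    ∑ i, ψ (α * absLoss w (ω i)) ≤ ∑ i, ψ (α * absLoss w' (ω i)) :=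
  le_of_mul_le_mul_left h (by positivity)

variable [MeasurableSpace H] (P : Measure (H × ℝ))

theorem l1Risk_le_add {w w' : H} (hw : Integrable (absLoss w) P) (hw' : Integrable (absLoss w') P)
    (hx : Integrable (fun z : H × ℝ => ‖z.1‖) P) :
    l1Risk P w ≤ l1Risk P w' + ‖w - w'‖ * ∫ z, ‖z.1‖ ∂P :=
  calc l1Risk P w ≤ ∫ z, (absLoss w' z + ‖w - w'‖ * ‖z.1‖) ∂P :=
        integral_mono hw (hw'.add (hx.const_mul _)) fun z =>
          (absLoss_le_add w w' z).trans_eq (by ring)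
    _ = l1Risk P w' + ‖w - w'‖ * ∫ z, ‖z.1‖ ∂P := by
        rw [integral_add hw' (hx.const_mul _), integral_const_mul]; rfl

theorem l1Risk_sub_le_of_norm_le {w w' : H} {B : ℝ} (hw : ‖w‖ ≤ B) (hw' : ‖w'‖ ≤ B)
    (h1 : Integrable (absLoss w) P) (h1' : Integrable (absLoss w') P)
    (hx : Integrable (fun z : H × ℝ => ‖z.1‖) P) :
    l1Risk P w - l1Risk P w' ≤ 2 * B * ∫ z, ‖z.1‖ ∂P := by
  have hdist : ‖w - w'‖ ≤ 2 * B := (norm_sub_le w w').trans (by linarith)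
  have := mul_le_mul_of_nonneg_right hdist (integral_nonneg (μ := P) fun z => norm_nonneg z.1)
  linarith [l1Risk_le_add P h1 h1' hx]

def upperTail (ψ : ℝ → ℝ) (α : ℝ) (n : ℕ) (w : H) (t : ℝ) : Set (Fin n → H × ℝ) :=
  {ω | n * (α * l1Risk P w + α ^ 2 * l2Risk P w / 2) + t ≤ ∑ i, ψ (α * absLoss w (ω i))}

def lowerTail (ψ : ℝ → ℝ) (α : ℝ) (n : ℕ) (r : ℝ) (v : H) (t : ℝ) : Set (Fin n → H × ℝ) :=
  {ω | ∑ i, ψ (α * (absLoss v (ω i) - r * ‖(ω i).1‖)) ≤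
    n * (α * (l1Risk P v - r * ∫ z, ‖z.1‖ ∂P) -
      α ^ 2 * (l2Risk P v + r ^ 2 * ∫ z, ‖z.1‖ ^ 2 ∂P) / 2) - t}

theorem l1Risk_sub_le_of_notMem_tails (hψ : Monotone ψ) {n : ℕ} (hn : 0 < n) {α : ℝ} (hα : 0 < α)
    {r t₁ t₂ : ℝ} {ω : Fin n → H × ℝ} {w v wstar : H} (hwv : ‖w - v‖ ≤ r)
    (hmin : truncEmpRisk ψ α n ω w ≤ truncEmpRisk ψ α n ω wstar)
    (hw : Integrable (absLoss w) P) (hv : Integrable (absLoss v) P)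
    (hx : Integrable (fun z : H × ℝ => ‖z.1‖) P)
    (hU : ω ∉ upperTail P ψ α n wstar t₁) (hL : ω ∉ lowerTail P ψ α n r v t₂) :
    l1Risk P w - l1Risk P wstar ≤ 2 * r * ∫ z, ‖z.1‖ ∂P +
      α * (l2Risk P v + r ^ 2 * (∫ z, ‖z.1‖ ^ 2 ∂P) + l2Risk P wstar) / 2 +
        (t₁ + t₂) / (n * α) := by
  simp only [upperTail, lowerTail, Set.mem_ofPred_eq, not_le] at hU hL
  have hsum := (sum_truncLoss_shift_le hψ hα.le ω hwv).trans
    (sum_truncLoss_le_of_truncEmpRisk_le hα hn hmin)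
  have hexcess : l1Risk P v - r * (∫ z, ‖z.1‖ ∂P) - l1Risk P wstar -
      α * (l2Risk P v + r ^ 2 * (∫ z, ‖z.1‖ ^ 2 ∂P) + l2Risk P wstar) / 2 <
        (t₁ + t₂) / (n * α) := by
    rw [lt_div_iff₀ (by positivity)]
    linarith
  have hlip : l1Risk P w ≤ l1Risk P v + r * ∫ z, ‖z.1‖ ∂P :=
    (l1Risk_le_add P hw hv hx).trans (by gcongr)
  linarith

variable [IsProbabilityMeasure P]

theorem measure_upperTail_le (n : ℕ) (hψ : ∀ s, ψ s ≤ log (1 + s + s ^ 2 / 2)) {w : H}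
    (hw1 : Integrable (absLoss w) P)
    (hw2 : Integrable (fun z : H × ℝ => (z.2 - ⟪z.1, w⟫) ^ 2) P) (α t : ℝ) :
    Measure.pi (fun _ : Fin n => P) (upperTail P ψ α n w t) ≤ ENNReal.ofReal (exp (-t)) := by
  have hsq : ∀ z, absLoss w z ^ 2 = (z.2 - ⟪z.1, w⟫) ^ 2 := fun z => sq_abs _
  have h1 : ∫ z, absLoss w z ∂P = l1Risk P w := rfl
  have h2 : ∫ z, absLoss w z ^ 2 ∂P = l2Risk P w := by simp only [hsq]; rfl
  have := measure_pi_sum_truncated_ge_le_exp_neg P n hψ hw1 (by simpa only [hsq] using hw2) α t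
  rwa [h1, h2] at this

theorem measure_lowerTail_le (n : ℕ) (hψ : ∀ s, -log (1 - s + s ^ 2 / 2) ≤ ψ s)
    {v : H} (hv1 : Integrable (absLoss v) P)
    (hv2 : Integrable (fun z : H × ℝ => (z.2 - ⟪z.1, v⟫) ^ 2) P)
    (hx : Integrable (fun z : H × ℝ => ‖z.1‖) P) (hx2 : Integrable (fun z : H × ℝ => ‖z.1‖ ^ 2) P)
    {r : ℝ} (hr : 0 ≤ r) (α t : ℝ) :
    Measure.pi (fun _ : Fin n => P) (lowerTail P ψ α n r v t) ≤ ENNReal.ofReal (exp (-t)) := by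
  -- the lower tail of `ψ` is the upper tail of its reflection `s ↦ -ψ (-s)`
  set g : H × ℝ → ℝ := fun z => r * ‖z.1‖ - absLoss v z
  have hg : Integrable g P := (hx.const_mul r).sub hv1
  have hg_sq_le : ∀ z, g z ^ 2 ≤ (z.2 - ⟪z.1, v⟫) ^ 2 + r ^ 2 * ‖z.1‖ ^ 2 := fun z => by
    have : 0 ≤ r * ‖z.1‖ * absLoss v z := by unfold absLoss; positivity
    simp only [g]
    nlinarith [show absLoss v z ^ 2 = _ from sq_abs _]
  have hbound : Integrable (fun z : H × ℝ => (z.2 - ⟪z.1, v⟫) ^ 2 + r ^ 2 * ‖z.1‖ ^ 2) P :=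
    hv2.add (hx2.const_mul _)
  have hg2 : Integrable (fun z => g z ^ 2) P :=
    hbound.mono' (hg.aestronglyMeasurable.pow 2) (Filter.Eventually.of_forall fun z => by
      rw [Real.norm_of_nonneg (sq_nonneg _)]; exact hg_sq_le z)
  have hint_g : ∫ z, g z ∂P = r * ∫ z, ‖z.1‖ ∂P - l1Risk P v := by
    rw [integral_sub (hx.const_mul r) hv1, integral_const_mul]; rfl
  have hint_g2 : ∫ z, g z ^ 2 ∂P ≤ l2Risk P v + r ^ 2 * ∫ z, ‖z.1‖ ^ 2 ∂P := by
    refine (integral_mono hg2 hbound hg_sq_le).trans_eq ?_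
    rw [integral_add hv2 (hx2.const_mul _), integral_const_mul]; rfl
  refine (measure_mono fun ω hω => ?_).trans (measure_pi_sum_truncated_ge_le_exp_neg P n
    (φ := fun s => -ψ (-s)) (fun s => by
      have := hψ (-s)
      rw [neg_sq, sub_neg_eq_add] at this
      linarith)
    hg hg2 α t)
  simp only [lowerTail, Set.mem_ofPred_eq, Finset.sum_neg_distrib, hint_g] at hω ⊢
  have hsum : ∑ i, ψ (-(α * g (ω i))) = ∑ i, ψ (α * (absLoss v (ω i) - r * ‖(ω i).1‖)) := by
    congr! 2; simp only [g]; ring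
  rw [hsum]
  nlinarith [mul_le_mul_of_nonneg_left hint_g2 (sq_nonneg α), (Nat.cast_nonneg n : (0 : ℝ) ≤ n)]

theorem truncated_min_excess_risk_le {W : Set H} (hψmono : Monotone ψ)
    (hψlb : ∀ s, -log (1 - s + s ^ 2 / 2) ≤ ψ s) (hψub : ∀ s, ψ s ≤ log (1 + s + s ^ 2 / 2))
    {n : ℕ} (hn : 0 < n) {α : ℝ} (hα : 0 < α) {δ : ℝ} (hδ : 0 < δ) {r : ℝ} (hr : 0 ≤ r)
    {Net : Finset H} (hNetW : ↑Net ⊆ W) (hcover : ∀ w ∈ W, ∃ v ∈ Net, ‖w - v‖ ≤ r)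
    {M : ℝ} (hM : ∀ w ∈ W, l2Risk P w ≤ M)
    (hx : Integrable (fun z : H × ℝ => ‖z.1‖) P) (hx2 : Integrable (fun z : H × ℝ => ‖z.1‖ ^ 2) P)
    (hInt1 : ∀ w ∈ W, Integrable (absLoss w) P)
    (hInt2 : ∀ w ∈ W, Integrable (fun z : H × ℝ => (z.2 - ⟪z.1, w⟫) ^ 2) P)
    {wstar : H} (hwstarW : wstar ∈ W) {what : (Fin n → H × ℝ) → H} (hwhatW : ∀ ω, what ω ∈ W)
    (hwhatMin : ∀ ω, truncEmpRisk ψ α n ω (what ω) ≤ truncEmpRisk ψ α n ω wstar) :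
    ENNReal.ofReal (1 - 2 * δ) ≤ Measure.pi (fun _ : Fin n => P)
      {ω | l1Risk P (what ω) - l1Risk P wstar ≤ 2 * r * ∫ z, ‖z.1‖ ∂P +
        α * (M + r ^ 2 * (∫ z, ‖z.1‖ ^ 2 ∂P) / 2) + log (Net.card / δ ^ 2) / (n * α)} := by
  obtain ⟨v₀, hv₀, -⟩ := hcover wstar hwstarW
  have hK : (0 : ℝ) < Net.card := by exact_mod_cast Finset.card_pos.2 ⟨v₀, hv₀⟩
  -- the confidence `δ` is split as `δ` for the competitor and `δ / #Net` for each net point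
  have ht : log (1 / δ) + log (Net.card / δ) = log (Net.card / δ ^ 2) := by
    rw [← log_mul (by positivity) (by positivity)]; congr 1; field_simp
  have hbad : Measure.pi (fun _ : Fin n => P) (upperTail P ψ α n wstar (log (1 / δ)) ∪
      ⋃ v ∈ Net, lowerTail P ψ α n r v (log (Net.card / δ))) ≤ ENNReal.ofReal (2 * δ) := calc
    _ ≤ ENNReal.ofReal δ + ∑ v ∈ Net, ENNReal.ofReal (δ / Net.card) := by
      refine (measure_union_le _ _).trans (add_le_add ?_
        ((measure_biUnion_finset_le _ _).trans (Finset.sum_le_sum fun v hv => ?_)))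
      · refine (measure_upperTail_le P n hψub (hInt1 _ hwstarW) (hInt2 _ hwstarW) _ _).trans_eq ?_
        rw [one_div, log_inv, neg_neg, exp_log hδ]
      · refine (measure_lowerTail_le P n hψlb (hInt1 _ (hNetW hv)) (hInt2 _ (hNetW hv)) hx hx2 hr
          _ _).trans_eq ?_
        rw [exp_neg, exp_log (by positivity), inv_div]
    _ = ENNReal.ofReal (2 * δ) := by
      rw [Finset.sum_const, nsmul_eq_mul, ← ENNReal.ofReal_natCast, ← ENNReal.ofReal_mul hK.le,
        mul_div_cancel₀ _ hK.ne', ← ENNReal.ofReal_add hδ.le hδ.le, two_mul]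
  refine ofReal_one_sub_le_measure (by positivity) hbad fun ω hω => ?_
  obtain ⟨v, hvNet, hwv⟩ := hcover (what ω) (hwhatW ω)
  simp only [Set.mem_compl_iff, Set.mem_union, Set.mem_iUnion, not_or, not_exists] at hω
  have hexcess := l1Risk_sub_le_of_notMem_tails P hψmono hn hα hwv (hwhatMin ω)
    (hInt1 _ (hwhatW ω)) (hInt1 _ (hNetW hvNet)) hx hω.1 (hω.2 v hvNet)
  have hM' : α * (l2Risk P v + l2Risk P wstar) ≤ α * (2 * M) := by
    gcongr; linarith [hM v (hNetW hvNet), hM wstar hwstarW]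
  rw [ht] at hexcess
  rw [Set.mem_ofPred_eq]
  linarith

theorem truncated_min_excess_risk_le_of_coveringNumber_le {W : Set H} (hψmono : Monotone ψ)
    (hψlb : ∀ s, -log (1 - s + s ^ 2 / 2) ≤ ψ s) (hψub : ∀ s, ψ s ≤ log (1 + s + s ^ 2 / 2))
    {n : ℕ} (hn : 0 < n) {δ : ℝ} (hδ : 0 < δ) (hδ1 : δ < 1)
    {T : Finset H} (hTW : ↑T ⊆ W) (hT : ∀ w ∈ W, ∃ v ∈ T, ‖w - v‖ ≤ 1 / n)
    {c : ℝ} {d : ℕ} (hNc : (coveringNumber W (1 / n) : ℝ) ≤ c ^ d)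
    {α : ℝ} (hαdef : α = sqrt (1 / n * log (coveringNumber W (1 / n) / δ ^ 2)))
    {M : ℝ} (hM : ∀ w ∈ W, l2Risk P w ≤ M)
    (hx : Integrable (fun z : H × ℝ => ‖z.1‖) P) (hx2 : Integrable (fun z : H × ℝ => ‖z.1‖ ^ 2) P)
    (hInt1 : ∀ w ∈ W, Integrable (absLoss w) P)
    (hInt2 : ∀ w ∈ W, Integrable (fun z : H × ℝ => (z.2 - ⟪z.1, w⟫) ^ 2) P)
    {wstar : H} (hwstarW : wstar ∈ W) {what : (Fin n → H × ℝ) → H} (hwhatW : ∀ ω, what ω ∈ W)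
    (hwhatMin : ∀ ω, truncEmpRisk ψ α n ω (what ω) ≤ truncEmpRisk ψ α n ω wstar) :
    ENNReal.ofReal (1 - 2 * δ) ≤ Measure.pi (fun _ : Fin n => P)
      {ω | l1Risk P (what ω) - l1Risk P wstar ≤ 2 / n * (∫ z, ‖z.1‖ ∂P) +
        sqrt (1 / n * (d * log c + log (1 / δ ^ 2))) *
          (1 / n ^ 2 * (∫ z, ‖z.1‖ ^ 2 ∂P) + 3 / 2 * M + 1)} := by
  obtain ⟨Net, hNetW, hNetcard, hcover⟩ := exists_cover_card_eq_coveringNumber hTW hT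
  have hNpos : 0 < coveringNumber W (1 / n) :=
    hNetcard ▸ Finset.card_pos.2 (let ⟨v, hv, _⟩ := hcover _ hwstarW; ⟨v, hv⟩)
  have hα : 0 < α := by
    refine hαdef ▸ sqrt_pos.2 (mul_pos (by positivity) (log_pos ?_))
    rw [one_lt_div (by positivity)]
    nlinarith [(Nat.one_le_cast (α := ℝ)).2 hNpos]
  have hα_le := hαdef ▸ sqrt_log_div_le hNpos hNc hδ
  have hM₀ : 0 ≤ M := (integral_nonneg fun _ => sq_nonneg _).trans (hM _ hwstarW)
  have hE₂ : 0 ≤ 1 / n ^ 2 * ∫ z, ‖z.1‖ ^ 2 ∂P :=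
    mul_nonneg (by positivity) (integral_nonneg fun _ => sq_nonneg _)
  refine (truncated_min_excess_risk_le P hψmono hψlb hψub hn hα hδ (by positivity) hNetW
    hcover hM hx hx2 hInt1 hInt2 hwstarW hwhatW hwhatMin).trans (measure_mono fun ω hω => ?_)
  rw [hNetcard, hαdef, div_mul_sqrt_one_div_mul, ← hαdef, Set.mem_ofPred_eq] at hω
  rw [Set.mem_ofPred_eq]
  calc _ ≤ 2 * (1 / n) * ∫ z, ‖z.1‖ ∂P +
        α * (M + (1 / n) ^ 2 * (∫ z, ‖z.1‖ ^ 2 ∂P) / 2) + α := hω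
    _ = 2 / n * ∫ z, ‖z.1‖ ∂P + α * (1 / n ^ 2 * (∫ z, ‖z.1‖ ^ 2 ∂P) / 2 + M + 1) := by ring
    _ ≤ _ := by gcongr <;> linarith

end Regression

theorem truncated_min_excess_risk_euclidean_general
    (d : ℕ) (P : Measure (EuclideanSpace ℝ (Fin d) × ℝ)) [IsProbabilityMeasure P]
    (W : Set (EuclideanSpace ℝ (Fin d))) (ψ : ℝ → ℝ)
    (hψmono : Monotone ψ)
    (hψlb : ∀ x : ℝ, -Real.log (1 - x + x ^ 2 / 2) ≤ ψ x)
    (hψub : ∀ x : ℝ, ψ x ≤ Real.log (1 + x + x ^ 2 / 2))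
    (n : ℕ) (hn : 0 < n)
    (δ : ℝ) (hδ : 0 < δ) (hδ' : δ < 1 / 2)
    -- (A5): the radius of W is bounded by B
    (B : ℝ) (hA5 : ∀ w ∈ W, ‖w‖ ≤ B)
    -- the tuned choice of α
    (α : ℝ)
    (hαdef : α = Real.sqrt ((1 / n) * Real.log ((coveringNumber W (1 / n) : ℝ) / δ ^ 2)))
    -- (A2): E‖x‖² < ∞ (and hence E‖x‖ < ∞)
    (hxInt : Integrable (fun z : EuclideanSpace ℝ (Fin d) × ℝ => ‖z.1‖) P)
    (hA2 : Integrable (fun z : EuclideanSpace ℝ (Fin d) × ℝ => ‖z.1‖ ^ 2) P)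
    -- risks are well defined on W
    (hInt1 : ∀ w ∈ W,
      Integrable (fun z : EuclideanSpace ℝ (Fin d) × ℝ => |z.2 - (inner ℝ z.1 w : ℝ)|) P)
    (hInt2 : ∀ w ∈ W,
      Integrable (fun z : EuclideanSpace ℝ (Fin d) × ℝ => (z.2 - (inner ℝ z.1 w : ℝ)) ^ 2) P)
    -- (A3): sup_{w ∈ W} R_{ℓ2}(w) < ∞
    (hA3 : BddAbove (l2Risk P '' W))
    -- ŵ : any minimizer of the truncated empirical risk over W
    (what : (Fin n → EuclideanSpace ℝ (Fin d) × ℝ) → EuclideanSpace ℝ (Fin d))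
    (hwhatW : ∀ ω, what ω ∈ W)
    (hwhatMin : ∀ ω, ∀ w ∈ W, truncEmpRisk ψ α n ω (what ω) ≤ truncEmpRisk ψ α n ω w)
    -- w* : any minimizer of the ℓ1-risk over W
    (wstar : EuclideanSpace ℝ (Fin d)) (hwstarW : wstar ∈ W) :
    ENNReal.ofReal (1 - 2 * δ) ≤
      Measure.pi (fun _ : Fin n => P)
        {ω | l1Risk P (what ω) - l1Risk P wstar ≤
          2 / n * (∫ z, ‖z.1‖ ∂P)
          + Real.sqrt ((1 / n) * (d * Real.log (6 * n * B) + Real.log (1 / δ ^ 2))) *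
            (1 / n ^ 2 * (∫ z, ‖z.1‖ ^ 2 ∂P) + 3 / 2 * sSup (l2Risk P '' W) + 1)} := by
  have hn' : (0 : ℝ) < n := Nat.cast_pos.2 hn
  have hS : ∀ w ∈ W, l2Risk P w ≤ sSup (l2Risk P '' W) := fun w hw => le_csSup hA3 ⟨w, hw, rfl⟩
  by_cases hBn : B ≤ 1 / n
  · refine ofReal_one_sub_le_measure (Bad := ∅) (by positivity) (by simp) fun ω _ => ?_
    have := l1Risk_sub_le_of_norm_le P ((hA5 _ (hwhatW ω)).trans hBn) ((hA5 _ hwstarW).trans hBn)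
      (hInt1 _ (hwhatW ω)) (hInt1 _ hwstarW) hxInt
    have : 0 ≤ sSup (l2Risk P '' W) := (integral_nonneg fun _ => sq_nonneg _).trans (hS _ hwstarW)
    have : 0 ≤ sqrt ((1 / n) * (d * log (6 * n * B) + log (1 / δ ^ 2))) *
        (1 / n ^ 2 * (∫ z, ‖z.1‖ ^ 2 ∂P) + 3 / 2 * sSup (l2Risk P '' W) + 1) := by positivity
    rw [Set.mem_ofPred_eq, div_eq_mul_one_div 2 (n : ℝ)]
    linarith
  obtain ⟨T, hTW, hT, -⟩ := exists_finset_cover_card_le_of_norm_le (one_div_pos.2 hn')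
    ((norm_nonneg _).trans (hA5 wstar hwstarW)) hA5
  exact truncated_min_excess_risk_le_of_coveringNumber_le P hψmono hψlb hψub hn hδ (by linarith)
    hTW hT (by simpa using coveringNumber_one_div_le hn (not_le.1 hBn) hA5)
    hαdef hS hxInt hA2 hInt1 hInt2 hwstarW hwhatW fun ω => hwhatMin ω wstar hwstarW

/-- Corollary 1 of the paper: for `W ⊆ ℝ^d` of radius at most `B`, with
`α = sqrt((1/n) log(N(W,1/n)/δ²))`, with probability at least `1 − 2δ`,
`R_{ℓ1}(ŵ) − R_{ℓ1}(w*) ≤ (2/n) E‖x‖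
  + sqrt((1/n)(d log(6nB) + log(1/δ²))) ((1/n²) E‖x‖² + (3/2) sup_{w∈W} R_{ℓ2}(w) + 1)`. -/
theorem truncated_min_excess_risk_euclidean
    (d : ℕ) (P : Measure (EuclideanSpace ℝ (Fin d) × ℝ)) [IsProbabilityMeasure P]
    (W : Set (EuclideanSpace ℝ (Fin d))) (ψ : ℝ → ℝ)
    (hψmono : Monotone ψ)
    (hψlb : ∀ x : ℝ, -Real.log (1 - x + x ^ 2 / 2) ≤ ψ x)
    (hψub : ∀ x : ℝ, ψ x ≤ Real.log (1 + x + x ^ 2 / 2))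
    (n : ℕ) (hn : 0 < n)
    (δ : ℝ) (hδ : 0 < δ) (hδ' : δ < 1 / 2)
    -- (A5): the radius of W is bounded by B
    (B : ℝ) (hA5 : ∀ w ∈ W, ‖w‖ ≤ B)
    -- the tuned choice of α
    (α : ℝ)
    (hαdef : α = Real.sqrt ((1 / n) * Real.log ((coveringNumber W (1 / n) : ℝ) / δ ^ 2)))
    -- (A2): E‖x‖² < ∞ (and hence E‖x‖ < ∞)
    (hxInt : Integrable (fun z : EuclideanSpace ℝ (Fin d) × ℝ => ‖z.1‖) P)
    (hA2 : Integrable (fun z : EuclideanSpace ℝ (Fin d) × ℝ => ‖z.1‖ ^ 2) P)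
    -- risks are well defined on W
    (hInt1 : ∀ w ∈ W,
      Integrable (fun z : EuclideanSpace ℝ (Fin d) × ℝ => |z.2 - (inner ℝ z.1 w : ℝ)|) P)
    (hInt2 : ∀ w ∈ W,
      Integrable (fun z : EuclideanSpace ℝ (Fin d) × ℝ => (z.2 - (inner ℝ z.1 w : ℝ)) ^ 2) P)
    -- (A3): sup_{w ∈ W} R_{ℓ2}(w) < ∞
    (hA3 : BddAbove (l2Risk P '' W))
    -- ŵ : any minimizer of the truncated empirical risk over W
    (what : (Fin n → EuclideanSpace ℝ (Fin d) × ℝ) → EuclideanSpace ℝ (Fin d))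
    (hwhatW : ∀ ω, what ω ∈ W)
    (hwhatMin : ∀ ω, ∀ w ∈ W, truncEmpRisk ψ α n ω (what ω) ≤ truncEmpRisk ψ α n ω w)
    -- w* : any minimizer of the ℓ1-risk over W
    (wstar : EuclideanSpace ℝ (Fin d)) (hwstarW : wstar ∈ W)
    (hwstarMin : ∀ w ∈ W, l1Risk P wstar ≤ l1Risk P w) :
    ENNReal.ofReal (1 - 2 * δ) ≤
      Measure.pi (fun _ : Fin n => P)
        {ω | l1Risk P (what ω) - l1Risk P wstar ≤
          2 / n * (∫ z, ‖z.1‖ ∂P)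
          + Real.sqrt ((1 / n) * (d * Real.log (6 * n * B) + Real.log (1 / δ ^ 2))) *
            (1 / n ^ 2 * (∫ z, ‖z.1‖ ^ 2 ∂P) + 3 / 2 * sSup (l2Risk P '' W) + 1)} :=
  truncated_min_excess_risk_euclidean_general d P W ψ hψmono hψlb hψub n hn δ hδ hδ' B hA5 α hαdef
    hxInt hA2 hInt1 hInt2 hA3 what hwhatW hwhatMin wstar hwstarW
end

section
/- Let w̃ ∈ W be a fixed vector (independent of the sample) and fix ε > 0. Then for every 0 < δ < 1, with probability at least 1 − δ over the i.i.d. sample, (1/(nα)) Σ_{i=1}^n ψ( α|y_i − ⟨x_i,w̃⟩| − α·ε·‖x_i‖ ) ≥ R_{ℓ1}(w̃) − [ ε·E[‖x‖] + α·R_{ℓ2}(w̃) + α·ε²·E[‖x‖²] + (1/(nα))·log(1/δ) ]. -/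
/-!
The lower bound on `ψ` gives `exp (-ψ x) ≤ 1 - x + x² / 2 ≤ exp (-x + x² / 2)`. For
`X = α |y - ⟪x, w̃⟫| - α ε ‖x‖` this bounds `E exp (-ψ X)` by `exp (-E X + E X² / 2)`, and
`E X² ≤ 2 α² R_{ℓ2}(w̃) + 2 α² ε² E ‖x‖²`. Over the i.i.d. sample the exponential moment of
`-∑ ψ (X_i)` is the `n`-th power of `E exp (-ψ X)`, so Markov's inequality (Chernoff's method)
bounds the probability that the truncated mean falls below the stated level by `δ`.
-/

open MeasureTheory Real

lemma exp_neg_le_one_sub_add_sq_div_two {ψ : ℝ → ℝ}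
    (hψ : ∀ x : ℝ, -log (1 - x + x ^ 2 / 2) ≤ ψ x) (x : ℝ) :
    exp (-ψ x) ≤ 1 - x + x ^ 2 / 2 := by
  have hpos : 0 < 1 - x + x ^ 2 / 2 := by nlinarith [sq_nonneg (x - 1)]
  calc exp (-ψ x) ≤ exp (log (1 - x + x ^ 2 / 2)) := exp_le_exp.2 (by linarith [hψ x])
    _ = 1 - x + x ^ 2 / 2 := exp_log hpos

section

variable {Ω : Type*} [MeasurableSpace Ω] {P : Measure Ω}

lemma ofReal_one_sub_le_measure_of_measureReal_compl_le [IsProbabilityMeasure P] {s : Set Ω}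
    {δ : ℝ} (hδ : 0 ≤ δ) (h : P.real sᶜ ≤ δ) : ENNReal.ofReal (1 - δ) ≤ P s := by
  have hcompl : P sᶜ ≤ ENNReal.ofReal δ :=
    (ENNReal.le_ofReal_iff_toReal_le (measure_ne_top _ _) hδ).2 h
  rw [ENNReal.ofReal_sub _ hδ, ENNReal.ofReal_one, tsub_le_iff_right]
  calc 1 = P Set.univ := measure_univ.symm
    _ ≤ P s + P sᶜ := measure_univ_le_add_compl s
    _ ≤ P s + ENNReal.ofReal δ := by gcongr

lemma integral_sub_sq_le {u v : Ω → ℝ} (hu : MemLp u 2 P) (hv : MemLp v 2 P) :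
    ∫ x, (u x - v x) ^ 2 ∂P ≤ 2 * ∫ x, u x ^ 2 ∂P + 2 * ∫ x, v x ^ 2 ∂P := by
  rw [← integral_const_mul, ← integral_const_mul,
    ← integral_add (hu.integrable_sq.const_mul _) (hv.integrable_sq.const_mul _)]
  exact integral_mono (hu.sub hv).integrable_sq
    ((hu.integrable_sq.const_mul _).add (hv.integrable_sq.const_mul _))
    fun x => by nlinarith [sq_nonneg (u x + v x)]

/-- Markov's inequality for `∏ i, exp (-f (ω i))`, whose mean factors over the product
measure. -/
lemma measureReal_pi_sum_le_le {ι : Type*} [Fintype ι] [SigmaFinite P] {f : Ω → ℝ}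
    (hf : Integrable (fun x => exp (-f x)) P) (t : ℝ) :
    (Measure.pi fun _ : ι => P).real {ω | ∑ i, f (ω i) ≤ t} ≤
      exp t * (∫ x, exp (-f x) ∂P) ^ Fintype.card ι := by
  have hmarkov := mul_meas_ge_le_integral_of_nonneg
    (ae_of_all (Measure.pi fun _ : ι => P) fun ω =>
      Finset.prod_nonneg fun i _ => (exp_pos (-f (ω i))).le)
    (Integrable.fintype_prod fun _ => hf) (exp (-t))
  rw [integral_fintype_prod_eq_pow (fun x => exp (-f x))] at hmarkov
  have hset : {ω : ι → Ω | ∑ i, f (ω i) ≤ t} = {ω | exp (-t) ≤ ∏ i, exp (-f (ω i))} := by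
    ext ω
    simp only [Set.mem_ofPred_eq, ← exp_sum, Finset.sum_neg_distrib, exp_le_exp, neg_le_neg_iff]
  calc (Measure.pi fun _ : ι => P).real {ω | ∑ i, f (ω i) ≤ t}
      = exp t * (exp (-t) * (Measure.pi fun _ : ι => P).real
          {ω | exp (-t) ≤ ∏ i, exp (-f (ω i))}) := by
        rw [hset, ← mul_assoc, ← exp_add, add_neg_cancel, exp_zero, one_mul]
    _ ≤ exp t * (∫ x, exp (-f x) ∂P) ^ Fintype.card ι := by gcongr

section

variable {ψ : ℝ → ℝ} (hψ : ∀ x : ℝ, -log (1 - x + x ^ 2 / 2) ≤ ψ x)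
  (hψm : Measurable ψ) {f : Ω → ℝ} (hf : Integrable f P) (hf2 : Integrable (fun x => f x ^ 2) P)
include hψ hψm hf hf2

lemma integrable_exp_neg_comp [IsFiniteMeasure P] : Integrable (fun x => exp (-ψ (f x))) P :=
  (((integrable_const 1).sub hf).add (hf2.div_const 2)).mono'
    (measurable_exp.comp_aemeasurable
      (hψm.comp_aemeasurable hf.aemeasurable).neg).aestronglyMeasurable
    (ae_of_all _ fun x => by
      rw [norm_of_nonneg (exp_pos _).le]
      exact exp_neg_le_one_sub_add_sq_div_two hψ (f x))

lemma integral_exp_neg_comp_le [IsProbabilityMeasure P] :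
    ∫ x, exp (-ψ (f x)) ∂P ≤ exp (-∫ x, f x ∂P + (∫ x, f x ^ 2 ∂P) / 2) := by
  have hlin : Integrable (fun x => 1 - f x) P := (integrable_const 1).sub hf
  have hquad : Integrable (fun x => 1 - f x + f x ^ 2 / 2) P := hlin.add (hf2.div_const 2)
  calc ∫ x, exp (-ψ (f x)) ∂P ≤ ∫ x, (1 - f x + f x ^ 2 / 2) ∂P :=
        integral_mono (integrable_exp_neg_comp hψ hψm hf hf2) hquad
          fun x => exp_neg_le_one_sub_add_sq_div_two hψ (f x)
    _ = (-∫ x, f x ∂P + (∫ x, f x ^ 2 ∂P) / 2) + 1 := by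
        rw [integral_add hlin (hf2.div_const 2),
          integral_sub (integrable_const 1) hf, integral_const, integral_div]
        simp only [probReal_univ, one_smul]
        ring
    _ ≤ exp (-∫ x, f x ∂P + (∫ x, f x ^ 2 ∂P) / 2) := add_one_le_exp _

end

lemma integral_exp_neg_comp_sub_le [IsProbabilityMeasure P] {ψ : ℝ → ℝ}
    (hψ : ∀ x : ℝ, -log (1 - x + x ^ 2 / 2) ≤ ψ x) (hψm : Measurable ψ) {u v : Ω → ℝ}
    (hu : MemLp u 2 P) (hv : MemLp v 2 P) :
    ∫ x, exp (-ψ (u x - v x)) ∂P ≤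
      exp (-∫ x, u x ∂P + ∫ x, v x ∂P + ∫ x, u x ^ 2 ∂P + ∫ x, v x ^ 2 ∂P) := by
  have hsq := integral_sub_sq_le hu hv
  refine (integral_exp_neg_comp_le (f := fun x => u x - v x) hψ hψm
    ((hu.sub hv).integrable one_le_two) (hu.sub hv).integrable_sq).trans (exp_le_exp.2 ?_)
  rw [integral_sub (hu.integrable one_le_two) (hv.integrable one_le_two)]
  linarith

lemma ofReal_one_sub_le_pi_mean_ge [IsProbabilityMeasure P] {n : ℕ} (hn : 0 < n) {α : ℝ}
    (hα : 0 < α) {f : Ω → ℝ} (hf : Integrable (fun x => exp (-f x)) P) {c : ℝ}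
    (hc : ∫ x, exp (-f x) ∂P ≤ exp (-(α * c))) {δ : ℝ} (hδ : 0 < δ) :
    ENNReal.ofReal (1 - δ) ≤ Measure.pi (fun _ : Fin n => P)
      {ω | 1 / (n * α) * ∑ i, f (ω i) ≥ c - 1 / (n * α) * log (1 / δ)} := by
  have hnα : 0 < (n : ℝ) * α := by positivity
  have hexponent : n * α * (c - 1 / (n * α) * log (1 / δ)) + n * -(α * c) = log δ := by
    rw [one_div δ, log_inv]
    field_simp
    ring
  set t := (n : ℝ) * α * (c - 1 / (n * α) * log (1 / δ))
  refine ofReal_one_sub_le_measure_of_measureReal_compl_le hδ.le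
    ((measureReal_mono fun ω hω => ?_).trans ((measureReal_pi_sum_le_le hf t).trans ?_))
  · simp only [Set.mem_compl_iff, Set.mem_ofPred_eq, ge_iff_le, not_le] at hω ⊢
    have := mul_lt_mul_of_pos_left hω hnα
    rw [← mul_assoc, mul_one_div_cancel hnα.ne', one_mul] at this
    exact this.le
  · rw [Fintype.card_fin]
    calc exp t * (∫ x, exp (-f x) ∂P) ^ n ≤ exp t * exp (-(α * c)) ^ n := by
          gcongr
      _ = δ := by rw [← exp_nat_mul, ← exp_add, hexponent, exp_log hδ]

end

theorem truncated_sum_lower_bound_fixed_general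
    {H : Type*} [NormedAddCommGroup H] [InnerProductSpace ℝ H]
    [MeasurableSpace H]
    (P : Measure (H × ℝ)) [IsProbabilityMeasure P]
    (ψ : ℝ → ℝ)
    (hψmono : Monotone ψ)
    (hψlb : ∀ x : ℝ, -Real.log (1 - x + x ^ 2 / 2) ≤ ψ x)
    (n : ℕ) (hn : 0 < n) (α : ℝ) (hα : 0 < α)
    -- (A2): E‖x‖² < ∞ (and hence E‖x‖ < ∞)
    (hxInt : Integrable (fun z : H × ℝ => ‖z.1‖) P)
    (hA2 : Integrable (fun z : H × ℝ => ‖z.1‖ ^ 2) P)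
    -- w̃ : a fixed vector of W, independent of the sample, with R_{ℓ2}(w̃) < ∞
    (wt : H)
    (hInt1 : Integrable (fun z : H × ℝ => |z.2 - (inner ℝ z.1 wt : ℝ)|) P)
    (hInt2 : Integrable (fun z : H × ℝ => (z.2 - (inner ℝ z.1 wt : ℝ)) ^ 2) P)
    (ε : ℝ)
    (δ : ℝ) (hδ : 0 < δ) :
    ENNReal.ofReal (1 - δ) ≤
      Measure.pi (fun _ : Fin n => P)
        {ω | 1 / (n * α) *
              ∑ i, ψ (α * |(ω i).2 - (inner ℝ (ω i).1 wt : ℝ)| - α * ε * ‖(ω i).1‖) ≥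
            l1Risk P wt -
              (ε * (∫ z, ‖z.1‖ ∂P) + α * l2Risk P wt
                + α * ε ^ 2 * (∫ z, ‖z.1‖ ^ 2 ∂P)
                + 1 / (n * α) * Real.log (1 / δ))} := by
  set u : H × ℝ → ℝ := fun z => α * |z.2 - (inner ℝ z.1 wt : ℝ)|
  set v : H × ℝ → ℝ := fun z => α * ε * ‖z.1‖
  have hu : MemLp u 2 P :=
    (memLp_two_iff_integrable_sq (hInt1.const_mul α).aestronglyMeasurable).2
      (by simpa only [u, mul_pow, sq_abs] using hInt2.const_mul (α ^ 2))
  have hv : MemLp v 2 P :=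
    (memLp_two_iff_integrable_sq (hxInt.const_mul _).aestronglyMeasurable).2
      (by simpa only [v, mul_pow] using hA2.const_mul (α ^ 2 * ε ^ 2))
  have hu2 : ∫ z, u z ^ 2 ∂P = α ^ 2 * l2Risk P wt := by
    simp only [u, mul_pow, sq_abs]
    exact integral_const_mul _ _
  have hv2 : ∫ z, v z ^ 2 ∂P = α ^ 2 * ε ^ 2 * ∫ z, ‖z.1‖ ^ 2 ∂P := by
    simp only [v, mul_pow]
    exact integral_const_mul _ _
  have hmgf := integral_exp_neg_comp_sub_le hψlb hψmono.measurable hu hv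
  rw [integral_const_mul, integral_const_mul, hu2, hv2] at hmgf
  have hc : ∫ z, exp (-ψ (u z - v z)) ∂P ≤ exp (-(α * (l1Risk P wt - (ε * (∫ z, ‖z.1‖ ∂P)
      + α * l2Risk P wt + α * ε ^ 2 * (∫ z, ‖z.1‖ ^ 2 ∂P))))) :=
    hmgf.trans_eq (congrArg exp (by rw [l1Risk]; ring))
  have hdev := ofReal_one_sub_le_pi_mean_ge (f := fun z => ψ (u z - v z)) hn hα
    (integrable_exp_neg_comp hψlb hψmono.measurable ((hu.sub hv).integrable one_le_two)
      (hu.sub hv).integrable_sq) hc hδ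
  simpa only [sub_sub] using hdev

/-- The fixed-vector version of Lemma 3 of the paper: for a fixed `w̃ ∈ W`, with probability
at least `1 − δ`,
`(1/(nα)) Σ_i ψ(α|y_i − ⟨x_i,w̃⟩| − αε‖x_i‖)
  ≥ R_{ℓ1}(w̃) − [ε E‖x‖ + α R_{ℓ2}(w̃) + αε² E‖x‖² + (1/(nα)) log(1/δ)]`. -/
theorem truncated_sum_lower_bound_fixed
    {H : Type*} [NormedAddCommGroup H] [InnerProductSpace ℝ H] [CompleteSpace H]
    [MeasurableSpace H] [BorelSpace H]
    (P : Measure (H × ℝ)) [IsProbabilityMeasure P]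
    (W : Set H) (ψ : ℝ → ℝ)
    (hψmono : Monotone ψ)
    (hψlb : ∀ x : ℝ, -Real.log (1 - x + x ^ 2 / 2) ≤ ψ x)
    (hψub : ∀ x : ℝ, ψ x ≤ Real.log (1 + x + x ^ 2 / 2))
    (n : ℕ) (hn : 0 < n) (α : ℝ) (hα : 0 < α)
    -- (A2): E‖x‖² < ∞ (and hence E‖x‖ < ∞)
    (hxInt : Integrable (fun z : H × ℝ => ‖z.1‖) P)
    (hA2 : Integrable (fun z : H × ℝ => ‖z.1‖ ^ 2) P)
    -- w̃ : a fixed vector of W, independent of the sample, with R_{ℓ2}(w̃) < ∞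
    (wt : H) (hwtW : wt ∈ W)
    (hInt1 : Integrable (fun z : H × ℝ => |z.2 - (inner ℝ z.1 wt : ℝ)|) P)
    (hInt2 : Integrable (fun z : H × ℝ => (z.2 - (inner ℝ z.1 wt : ℝ)) ^ 2) P)
    (ε : ℝ) (hε : 0 < ε)
    (δ : ℝ) (hδ : 0 < δ) (hδ' : δ < 1) :
    ENNReal.ofReal (1 - δ) ≤
      Measure.pi (fun _ : Fin n => P)
        {ω | 1 / (n * α) *
              ∑ i, ψ (α * |(ω i).2 - (inner ℝ (ω i).1 wt : ℝ)| - α * ε * ‖(ω i).1‖) ≥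
            l1Risk P wt -
              (ε * (∫ z, ‖z.1‖ ∂P) + α * l2Risk P wt
                + α * ε ^ 2 * (∫ z, ‖z.1‖ ^ 2 ∂P)
                + 1 / (n * α) * Real.log (1 / δ))} :=
  truncated_sum_lower_bound_fixed_general P ψ hψmono hψlb n hn α hα hxInt hA2 wt hInt1 hInt2 ε δ hδ
end

section
/- Let w̃ ∈ W be a fixed vector with R_{ℓ2}(w̃) < ∞, and fix ε > 0. Then E[ exp( −Σ_{i=1}^n ψ( α|y_i − ⟨x_i,w̃⟩| − α·ε·‖x_i‖ ) ) ] ≤ exp( n·( −α·R_{ℓ1}(w̃) + α·ε·E[‖x‖] + α²·R_{ℓ2}(w̃) + α²·ε²·E[‖x‖²] ) ), where the expectation is over the i.i.d. sample. -/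
/-!
The sample is i.i.d., so the expectation of `exp (-Σᵢ ψ(tᵢ))` factorises into the `n`-th power of
the single-sample expectation of `exp (-ψ t)`. The lower bound on `ψ` gives
`exp (-ψ t) ≤ 1 - t + t² / 2`, and for `t = a - b` with `a = α|y - ⟨x, w̃⟩|`, `b = αε‖x‖` one has
`(a - b)² / 2 ≤ a² + b²`; integrating, the single-sample expectation is at most `1 + c ≤ exp c`,
where `c` is the exponent on the right-hand side divided by `n`.
-/

open MeasureTheory Real

open ProbabilityTheory

section

variable {Ω : Type*} [MeasurableSpace Ω] {μ : Measure Ω} [IsProbabilityMeasure μ]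

lemma lintegral_pi_prod_comp_eq_pow {ι : Type*} [Fintype ι] {f : Ω → ENNReal}
    (hf : Measurable f) :
    ∫⁻ ω : ι → Ω, ∏ i, f (ω i) ∂Measure.pi (fun _ => μ) = (∫⁻ x, f x ∂μ) ^ Fintype.card ι := by
  rw [lintegral_prod_eq_prod_lintegral_of_indepFun _ _
      (iIndepFun_pi fun _ => hf.aemeasurable) fun i => hf.comp (measurable_pi_apply i)]
  simp_rw [(measurePreserving_eval (fun _ : ι => μ) _).lintegral_comp hf]
  simp

lemma exp_neg_le_of_neg_log_le {ψ x : ℝ} (h : -log (1 - x + x ^ 2 / 2) ≤ ψ) :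
    exp (-ψ) ≤ 1 - x + x ^ 2 / 2 := by
  have hpos : 0 < 1 - x + x ^ 2 / 2 := by nlinarith [sq_nonneg (x - 1)]
  calc exp (-ψ) ≤ exp (log (1 - x + x ^ 2 / 2)) := exp_le_exp.mpr (by linarith)
    _ = 1 - x + x ^ 2 / 2 := exp_log hpos

lemma one_sub_add_sq_div_two_le (a b : ℝ) :
    1 - (a - b) + (a - b) ^ 2 / 2 ≤ 1 - a + b + a ^ 2 + b ^ 2 := by
  nlinarith [sq_nonneg (a + b)]

lemma lintegral_exp_neg_sub_le {ψ : ℝ → ℝ} (hψ : ∀ x, -log (1 - x + x ^ 2 / 2) ≤ ψ x)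
    {a b : Ω → ℝ} (ha : Integrable a μ) (hb : Integrable b μ)
    (ha2 : Integrable (fun z => a z ^ 2) μ) (hb2 : Integrable (fun z => b z ^ 2) μ) :
    ∫⁻ z, ENNReal.ofReal (exp (-ψ (a z - b z))) ∂μ ≤
      ENNReal.ofReal (exp (-∫ z, a z ∂μ + ∫ z, b z ∂μ + ∫ z, a z ^ 2 ∂μ + ∫ z, b z ^ 2 ∂μ)) := by
  set h : Ω → ℝ := fun z => 1 - a z + b z + a z ^ 2 + b z ^ 2
  have hle : ∀ z, exp (-ψ (a z - b z)) ≤ h z := fun z =>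
    (exp_neg_le_of_neg_log_le (hψ _)).trans (one_sub_add_sq_div_two_le _ _)
  have i1 : Integrable (fun z => 1 - a z) μ := (integrable_const 1).sub ha
  have i2 : Integrable (fun z => 1 - a z + b z) μ := i1.add hb
  have i3 : Integrable (fun z => 1 - a z + b z + a z ^ 2) μ := i2.add ha2
  have hint : Integrable h μ := i3.add hb2
  have hval : ∫ z, h z ∂μ =
      1 + (-∫ z, a z ∂μ + ∫ z, b z ∂μ + ∫ z, a z ^ 2 ∂μ + ∫ z, b z ^ 2 ∂μ) := by
    rw [integral_add i3 hb2, integral_add i2 ha2, integral_add i1 hb,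
      integral_sub (integrable_const 1) ha]
    simp only [integral_const, probReal_univ, smul_eq_mul, one_mul]
    ring
  calc ∫⁻ z, ENNReal.ofReal (exp (-ψ (a z - b z))) ∂μ
      ≤ ∫⁻ z, ENNReal.ofReal (h z) ∂μ := lintegral_mono fun z => ENNReal.ofReal_le_ofReal (hle z)
    _ = ENNReal.ofReal (∫ z, h z ∂μ) := (ofReal_integral_eq_lintegral_ofReal hint
        (Filter.Eventually.of_forall fun z => (exp_pos _).le.trans (hle z))).symm
    _ ≤ _ := by
      rw [hval]
      exact ENNReal.ofReal_le_ofReal (by linarith [add_one_le_exp (-∫ z, a z ∂μ + ∫ z, b z ∂μ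
        + ∫ z, a z ^ 2 ∂μ + ∫ z, b z ^ 2 ∂μ)])

lemma lintegral_pi_exp_neg_sum_le {g : Ω → ℝ} (hg : Measurable g) {c : ℝ}
    (h : ∫⁻ z, ENNReal.ofReal (exp (-g z)) ∂μ ≤ ENNReal.ofReal (exp c)) (n : ℕ) :
    ∫⁻ ω : Fin n → Ω, ENNReal.ofReal (exp (-∑ i, g (ω i))) ∂Measure.pi (fun _ => μ) ≤
      ENNReal.ofReal (exp (n * c)) := by
  have hprod (ω : Fin n → Ω) : ENNReal.ofReal (exp (-∑ i, g (ω i))) =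
      ∏ i, ENNReal.ofReal (exp (-g (ω i))) := by
    rw [← ENNReal.ofReal_prod_of_nonneg fun i _ => (exp_pos _).le, ← exp_sum,
      Finset.sum_neg_distrib]
  simp_rw [hprod]
  rw [lintegral_pi_prod_comp_eq_pow (f := fun z => ENNReal.ofReal (exp (-g z))) (by fun_prop),
    Fintype.card_fin, exp_nat_mul, ENNReal.ofReal_pow (exp_pos _).le]
  exact pow_le_pow_left₀ zero_le h n

end

theorem mgf_neg_truncated_sum_upper_bound_general
    {H : Type*} [NormedAddCommGroup H] [InnerProductSpace ℝ H]
    [MeasurableSpace H] [BorelSpace H]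
    (P : Measure (H × ℝ)) [IsProbabilityMeasure P]
    (ψ : ℝ → ℝ)
    (hψmono : Monotone ψ)
    (hψlb : ∀ x : ℝ, -Real.log (1 - x + x ^ 2 / 2) ≤ ψ x)
    (n : ℕ) (α : ℝ)
    -- (A2): E‖x‖² < ∞ (and hence E‖x‖ < ∞)
    (hxInt : Integrable (fun z : H × ℝ => ‖z.1‖) P)
    (hA2 : Integrable (fun z : H × ℝ => ‖z.1‖ ^ 2) P)
    -- w̃ : a fixed vector of W with R_{ℓ2}(w̃) < ∞
    (wt : H)
    (hInt1 : Integrable (fun z : H × ℝ => |z.2 - (inner ℝ z.1 wt : ℝ)|) P)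
    (hInt2 : Integrable (fun z : H × ℝ => (z.2 - (inner ℝ z.1 wt : ℝ)) ^ 2) P)
    (ε : ℝ) :
    ∫⁻ ω : Fin n → H × ℝ,
        ENNReal.ofReal
          (Real.exp (-∑ i, ψ (α * |(ω i).2 - (inner ℝ (ω i).1 wt : ℝ)| - α * ε * ‖(ω i).1‖)))
        ∂Measure.pi (fun _ : Fin n => P) ≤
      ENNReal.ofReal
        (Real.exp (n * (-(α * l1Risk P wt) + α * ε * (∫ z, ‖z.1‖ ∂P)
          + α ^ 2 * l2Risk P wt + α ^ 2 * ε ^ 2 * (∫ z, ‖z.1‖ ^ 2 ∂P)))) := by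
  have hfactor := lintegral_exp_neg_sub_le hψlb
    (a := fun z : H × ℝ => α * |z.2 - (inner ℝ z.1 wt : ℝ)|)
    (b := fun z : H × ℝ => α * ε * ‖z.1‖)
    (hInt1.const_mul α) (hxInt.const_mul (α * ε))
    (by simpa only [mul_pow, sq_abs] using hInt2.const_mul (α ^ 2))
    (by simpa only [mul_pow] using hA2.const_mul (α ^ 2 * ε ^ 2))
  simp only [mul_pow, sq_abs, integral_const_mul] at hfactor
  exact lintegral_pi_exp_neg_sum_le (hψmono.measurable.comp (by fun_prop)) hfactor n

/-- Equation (14) of the paper: for a fixed `w̃` with `R_{ℓ2}(w̃) < ∞` and `ε > 0`,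
`E[exp(−Σ_i ψ(α|y_i − ⟨x_i,w̃⟩| − αε‖x_i‖))]
  ≤ exp(n(−α R_{ℓ1}(w̃) + αε E‖x‖ + α² R_{ℓ2}(w̃) + α²ε² E‖x‖²))`. -/
theorem mgf_neg_truncated_sum_upper_bound
    {H : Type*} [NormedAddCommGroup H] [InnerProductSpace ℝ H] [CompleteSpace H]
    [MeasurableSpace H] [BorelSpace H]
    (P : Measure (H × ℝ)) [IsProbabilityMeasure P]
    (W : Set H) (ψ : ℝ → ℝ)
    (hψmono : Monotone ψ)
    (hψlb : ∀ x : ℝ, -Real.log (1 - x + x ^ 2 / 2) ≤ ψ x)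
    (hψub : ∀ x : ℝ, ψ x ≤ Real.log (1 + x + x ^ 2 / 2))
    (n : ℕ) (α : ℝ) (hα : 0 < α)
    -- (A2): E‖x‖² < ∞ (and hence E‖x‖ < ∞)
    (hxInt : Integrable (fun z : H × ℝ => ‖z.1‖) P)
    (hA2 : Integrable (fun z : H × ℝ => ‖z.1‖ ^ 2) P)
    -- w̃ : a fixed vector of W with R_{ℓ2}(w̃) < ∞
    (wt : H) (hwtW : wt ∈ W)
    (hInt1 : Integrable (fun z : H × ℝ => |z.2 - (inner ℝ z.1 wt : ℝ)|) P)
    (hInt2 : Integrable (fun z : H × ℝ => (z.2 - (inner ℝ z.1 wt : ℝ)) ^ 2) P)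
    (ε : ℝ) (hε : 0 < ε) :
    ∫⁻ ω : Fin n → H × ℝ,
        ENNReal.ofReal
          (Real.exp (-∑ i, ψ (α * |(ω i).2 - (inner ℝ (ω i).1 wt : ℝ)| - α * ε * ‖(ω i).1‖)))
        ∂Measure.pi (fun _ : Fin n => P) ≤
      ENNReal.ofReal
        (Real.exp (n * (-(α * l1Risk P wt) + α * ε * (∫ z, ‖z.1‖ ∂P)
          + α ^ 2 * l2Risk P wt + α ^ 2 * ε ^ 2 * (∫ z, ‖z.1‖ ^ 2 ∂P)))) :=
  mgf_neg_truncated_sum_upper_bound_general P ψ hψmono hψlb n α hxInt hA2 wt hInt1 hInt2 ε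
end
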